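/- arXiv:1810.12562 — 15 statements merged into one kernel-verified Lean document; each statement's English description precedes it below -/
import Mathlib

section
/- Let K be a field that is not algebraically closed, let X be a nonempty set, and let A be a subring of the ring of all functions X → K (with pointwise operations) such that A contains all constant functions and every f ∈ A with no zero on X is invertible in A. Then for all f₁, …, fₙ, g ∈ A the following are equivalent: (1) Z(f₁) ∩ … ∩ Z(fₙ) ⊆ Z(g); (2) g lies in the Jacobson radical of the ideal of A generated by f₁, …, fₙ; (3) for every h ∈ A, the image of 1 + h·g in the quotient ring A/(f₁, …, fₙ) is a unit. -/
/-!
Since `K` is not algebraically closed, some polynomial `p` of degree `d ≥ 1` has no root in `K`,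
so its homogenization `Φ(a, b)` vanishes on `K²` only at `(0, 0)`. Nesting `Φ` over
`f₁, …, fₙ` gives one `F` in `I = (f₁, …, fₙ)` with `Z(F) = Z(f₁) ∩ … ∩ Z(fₙ)`. If
`Z(I) ⊆ Z(g)`, then `Φ(1 + h g, F)` has no zero, so it is a unit of `A`; modulo `I` it is
`c (1 + h g)^d` with `c` constant, so `1 + h g` is a unit of `A / I`. Conversely, evaluation at a
common zero `x` factors through `A / I`, and `h = -g(x)⁻¹` makes `1 + h g` vanish at `x`.
-/

open Polynomial

lemma MvPolynomial.IsHomogeneous.eval₂_mem {σ R S : Type*} [CommSemiring R] [CommRing S]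
    {P : MvPolynomial σ R} {n : ℕ} (hP : P.IsHomogeneous n) (hn : n ≠ 0) (f : R →+* S)
    {g : σ → S} {I : Ideal S} (hg : ∀ i, g i ∈ I) : P.eval₂ f g ∈ I := by
  have hX : P ∈ Ideal.span (Set.range X) := by
    rw [← Set.image_univ, mem_ideal_span_X_image]
    intro m hm
    by_contra! h
    apply hn
    obtain rfl : m = 0 := by ext i; simpa using h i
    simpa using (hP (mem_support_iff.mp hm)).symm
  have hle : Ideal.span (Set.range X) ≤ I.comap (eval₂Hom f g) := by
    rw [Ideal.span_le]
    rintro _ ⟨i, rfl⟩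
    simpa using hg i
  exact hle hX

namespace Polynomial

lemma eval₂_homogenize_of_eq_zero {R S : Type*} [CommSemiring R] [CommSemiring S]
    (p : R[X]) (n : ℕ) (f : R →+* S) (g : Fin 2 → S) (hg : g 1 = 0) :
    MvPolynomial.eval₂ f g (p.homogenize n) = f (p.coeff n) * g 0 ^ n := by
  rw [homogenize, MvPolynomial.eval₂_sum, Finset.sum_eq_single (n, 0)]
  · simp [MvPolynomial.eval₂_monomial, Finsupp.prod_fintype]
  · rintro ⟨k, l⟩ hkl hne
    have hl : l ≠ 0 := by
      rintro rfl
      simp_all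
    simp [MvPolynomial.eval₂_monomial, Finsupp.prod_fintype, hg, hl]
  · simp

variable {K R : Type*} [Field K] [CommRing R]

noncomputable def binaryForm (C : K →+* R) (p : K[X]) (a b : R) : R :=
  MvPolynomial.eval₂ C ![a, b] (p.homogenize p.natDegree)

variable (C : K →+* R) (p : K[X])

lemma map_binaryForm {S : Type*} [CommRing S] (ψ : R →+* S) (a b : R) :
    ψ (binaryForm C p a b) = binaryForm (ψ.comp C) p (ψ a) (ψ b) := by
  rw [binaryForm, MvPolynomial.eval₂_comp_left, binaryForm]
  congr 1
  ext i; fin_cases i <;> rfl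

lemma binaryForm_mem (hp : p.natDegree ≠ 0) {I : Ideal R} {a b : R} (ha : a ∈ I) (hb : b ∈ I) :
    binaryForm C p a b ∈ I :=
  (isHomogeneous_homogenize p).eval₂_mem hp C fun i => by fin_cases i <;> assumption

lemma binaryForm_zero_right (a : R) :
    binaryForm C p a 0 = C p.leadingCoeff * a ^ p.natDegree :=
  eval₂_homogenize_of_eq_zero p _ C _ rfl

lemma binaryForm_id_eq_zero_iff (hp : p.natDegree ≠ 0) (hroot : ∀ x, p.eval x ≠ 0) (α β : K) :
    binaryForm (RingHom.id K) p α β = 0 ↔ α = 0 ∧ β = 0 := by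
  rcases eq_or_ne β 0 with rfl | hβ
  · have hp0 : p ≠ 0 := by rintro rfl; simp at hp
    simp [binaryForm_zero_right, hp0, hp]
  · have h := eval_homogenize (p := p) le_rfl ![α, β] hβ
    simp only [binaryForm, hβ, and_false, iff_false]
    change MvPolynomial.eval ![α, β] _ ≠ 0
    simp only [h, Matrix.cons_val_zero, Matrix.cons_val_one]
    exact mul_ne_zero (hroot _) (pow_ne_zero _ hβ)

end Polynomial

theorem Ideal.mem_jacobson_iff_forall_isUnit_mk {R : Type*} [CommRing R] {I : Ideal R} {g : R} :
    g ∈ I.jacobson ↔ ∀ h, IsUnit (Ideal.Quotient.mk I (1 + h * g)) := by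
  have hI : I.jacobson = (⊥ : Ideal (R ⧸ I)).jacobson.comap (Ideal.Quotient.mk I) := by
    rw [Ideal.comap_jacobson_of_surjective Ideal.Quotient.mk_surjective,
      ← RingHom.ker_eq_comap_bot, Ideal.mk_ker]
  rw [hI, Ideal.mem_comap, Ideal.mem_jacobson_bot, Ideal.Quotient.mk_surjective.forall]
  simp only [map_add, map_mul, map_one, add_comm, mul_comm]

lemma Ideal.map_ne_zero_of_isUnit_mk {R S : Type*} [CommRing R] [CommRing S] [Nontrivial S]
    {I : Ideal R} (ψ : R →+* S) (hI : I ≤ RingHom.ker ψ) {a : R}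
    (ha : IsUnit (Ideal.Quotient.mk I a)) : ψ a ≠ 0 :=
  (ha.map (Ideal.Quotient.lift I ψ hI)).ne_zero

lemma exists_natDegree_ne_zero_forall_eval_ne_zero {K : Type*} [Field K] (hK : ¬IsAlgClosed K) :
    ∃ p : K[X], p.natDegree ≠ 0 ∧ ∀ x, p.eval x ≠ 0 := by
  contrapose! hK
  exact IsAlgClosed.of_exists_root K fun p hm hirr =>
    hK p (natDegree_pos_iff_degree_pos.mpr (degree_pos_of_irreducible hirr)).ne'

namespace Subring

variable {K X : Type*} [Field K] (A : Subring (X → K))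

def evalRingHom (x : X) : A →+* K := (Pi.evalRingHom (fun _ => K) x).comp A.subtype

def constRingHom (hconst : ∀ c : K, (fun _ : X => c) ∈ A) : K →+* A :=
  (Pi.constRingHom X K).codRestrict A hconst

variable {A}

lemma evalRingHom_comp_constRingHom (hconst : ∀ c : K, (fun _ : X => c) ∈ A) (x : X) :
    (A.evalRingHom x).comp (A.constRingHom hconst) = RingHom.id K := rfl

lemma evalRingHom_binaryForm (hconst : ∀ c : K, (fun _ : X => c) ∈ A) (p : K[X]) (a b : A)
    (x : X) :
    A.evalRingHom x (binaryForm (A.constRingHom hconst) p a b)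
      = binaryForm (RingHom.id K) p ((a : X → K) x) ((b : X → K) x) := by
  rw [map_binaryForm, evalRingHom_comp_constRingHom]
  rfl

lemma exists_mem_span_eq_zero_iff (hconst : ∀ c : K, (fun _ : X => c) ∈ A) {p : K[X]}
    (hp : p.natDegree ≠ 0) (hroot : ∀ x, p.eval x ≠ 0) {n : ℕ} (f : Fin n → A) :
    ∃ F ∈ Ideal.span (Set.range f), ∀ x, (F : X → K) x = 0 ↔ ∀ i, (f i : X → K) x = 0 := by
  induction n with
  | zero => exact ⟨0, Ideal.zero_mem _, fun x => by simp⟩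
  | succ n ih =>
    obtain ⟨F, hF, hFzero⟩ := ih (f ∘ Fin.succ)
    refine ⟨binaryForm (A.constRingHom hconst) p (f 0) F, ?_, fun x => ?_⟩
    · refine binaryForm_mem _ p hp (Ideal.subset_span ⟨0, rfl⟩) (Ideal.span_mono ?_ hF)
      rintro _ ⟨i, rfl⟩
      exact ⟨i.succ, rfl⟩
    · change A.evalRingHom x _ = 0 ↔ _
      rw [evalRingHom_binaryForm, binaryForm_id_eq_zero_iff p hp hroot, Fin.forall_fin_succ,
        hFzero]
      rfl

lemma isUnit_mk_of_no_common_zero (hconst : ∀ c : K, (fun _ : X => c) ∈ A)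
    (hunit : ∀ f : A, (∀ x : X, (f : X → K) x ≠ 0) → IsUnit f)
    {p : K[X]} (hp : p.natDegree ≠ 0) (hroot : ∀ x, p.eval x ≠ 0) {I : Ideal A} {F u : A}
    (hF : F ∈ I) (hFu : ∀ x, (F : X → K) x = 0 → (u : X → K) x ≠ 0) :
    IsUnit (Ideal.Quotient.mk I u) := by
  have hform : IsUnit (binaryForm (A.constRingHom hconst) p u F) := by
    refine hunit _ fun x hx => ?_
    change A.evalRingHom x _ = 0 at hx
    rw [evalRingHom_binaryForm, binaryForm_id_eq_zero_iff p hp hroot] at hx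
    exact hFu x hx.2 hx.1
  have hmk := hform.map (Ideal.Quotient.mk I)
  rw [map_binaryForm, Ideal.Quotient.eq_zero_iff_mem.mpr hF, binaryForm_zero_right,
    IsUnit.mul_iff, isUnit_pow_iff hp] at hmk
  exact hmk.2

end Subring

theorem stmt_0_general {K : Type*} [Field K] (hK : ¬ IsAlgClosed K)
    {X : Type*} (A : Subring (X → K))
    (hconst : ∀ c : K, (fun _ : X => c) ∈ A)
    (hunit : ∀ f : A, (∀ x : X, (f : X → K) x ≠ 0) → IsUnit f)
    (n : ℕ) (f : Fin n → A) (g : A) :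
    ((⋂ i, {x : X | (f i : X → K) x = 0}) ⊆ {x : X | (g : X → K) x = 0}
        ↔ g ∈ (Ideal.span (Set.range f)).jacobson)
      ∧ (g ∈ (Ideal.span (Set.range f)).jacobson
        ↔ ∀ h : A, IsUnit (Ideal.Quotient.mk (Ideal.span (Set.range f)) (1 + h * g))) := by
  obtain ⟨p, hp, hroot⟩ := exists_natDegree_ne_zero_forall_eval_ne_zero hK
  obtain ⟨F, hF, hFzero⟩ := A.exists_mem_span_eq_zero_iff hconst hp hroot f
  rw [Ideal.mem_jacobson_iff_forall_isUnit_mk, and_iff_left Iff.rfl]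
  constructor
  · intro hsub h
    refine A.isUnit_mk_of_no_common_zero hconst hunit hp hroot hF fun x hx hu => ?_
    have hg : (g : X → K) x = 0 := hsub (Set.mem_iInter.mpr ((hFzero x).mp hx))
    have : 1 + (h : X → K) x * (g : X → K) x = 0 := hu
    simp [hg] at this
  · intro hall x hx
    simp only [Set.mem_iInter, Set.mem_ofPred_eq] at hx ⊢
    by_contra hg
    have hI : Ideal.span (Set.range f) ≤ RingHom.ker (A.evalRingHom x) := by
      rw [Ideal.span_le]
      rintro _ ⟨i, rfl⟩
      exact hx i
    apply Ideal.map_ne_zero_of_isUnit_mk _ hI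
      (hall (A.constRingHom hconst (-((g : X → K) x)⁻¹)))
    change 1 + -((g : X → K) x)⁻¹ * (g : X → K) x = 0
    rw [neg_mul, inv_mul_cancel₀ hg, add_neg_cancel]

theorem stmt_0 {K : Type*} [Field K] (hK : ¬ IsAlgClosed K)
    {X : Type*} [Nonempty X] (A : Subring (X → K))
    (hconst : ∀ c : K, (fun _ : X => c) ∈ A)
    (hunit : ∀ f : A, (∀ x : X, (f : X → K) x ≠ 0) → IsUnit f)
    (n : ℕ) (f : Fin n → A) (g : A) :
    ((⋂ i, {x : X | (f i : X → K) x = 0}) ⊆ {x : X | (g : X → K) x = 0}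
        ↔ g ∈ (Ideal.span (Set.range f)).jacobson)
      ∧ (g ∈ (Ideal.span (Set.range f)).jacobson
        ↔ ∀ h : A, IsUnit (Ideal.Quotient.mk (Ideal.span (Set.range f)) (1 + h * g))) :=
  stmt_0_general hK A hconst hunit n f g
end

section
/- Let X be a nonempty set and let A be a subring of the ring of all functions X → ℂ (with pointwise operations) such that: A contains all constant functions; every f ∈ A with no zero on X is invertible in A; and A is closed under pointwise complex conjugation (if f ∈ A then x ↦ conj(f(x)) is in A). Then for all f₁, …, fₙ, g ∈ A: Z(f₁) ∩ … ∩ Z(fₙ) ⊆ Z(g) if and only if g lies in the Jacobson radical of the ideal of A generated by f₁, …, fₙ. -/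
/-!
If `g` vanishes on the common zeros of `f₁, …, fₙ` but lies outside a maximal ideal `M ⊇ (f₁, …, fₙ)`,
then `M` contains some `m = 1 - y g`, and `f₁, …, fₙ, m` have no common zero. Since `A` is closed under
conjugation, `∑ |fᵢ|² + |m|²` lies in `M`; it vanishes nowhere, so it is a unit and `M = ⊤`.
Conversely, the kernels of the evaluations `A → ℂ` are maximal because `A` contains the constants,
and such a kernel contains `(f₁, …, fₙ)` exactly at a common zero.
-/

open Complex

namespace Subring

variable {X : Type*} (A : Subring (X → ℂ))

def evalAt (x : X) : A →+* ℂ := (Pi.evalRingHom (fun _ => ℂ) x).comp A.subtype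

lemma ker_evalAt_isMaximal (hconst : ∀ c : ℂ, (fun _ : X => c) ∈ A) (x : X) :
    (RingHom.ker (A.evalAt x)).IsMaximal :=
  RingHom.ker_isMaximal_of_surjective _ fun c => ⟨⟨fun _ => c, hconst c⟩, rfl⟩

section Conj

variable {A} (hconj : ∀ f : A, (fun x : X => starRingEnd ℂ ((f : X → ℂ) x)) ∈ A)
include hconj

lemma exists_mem_forall_eq_sum_normSq {ι : Type*} [Fintype ι] (J : Ideal A) (f : ι → A)
    (hf : ∀ i, f i ∈ J) : ∃ s ∈ J, ∀ x, (s : X → ℂ) x = ∑ i, (normSq ((f i : X → ℂ) x) : ℂ) := by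
  refine ⟨∑ i, ⟨_, hconj (f i)⟩ * f i, J.sum_mem fun i _ => J.mul_mem_left _ (hf i), fun x => ?_⟩
  simp [normSq_eq_conj_mul_self]

lemma ideal_eq_top_of_forall_exists_ne_zero
    (hunit : ∀ f : A, (∀ x : X, (f : X → ℂ) x ≠ 0) → IsUnit f)
    {ι : Type*} [Fintype ι] (J : Ideal A) (f : ι → A) (hf : ∀ i, f i ∈ J)
    (hzero : ∀ x, ∃ i, (f i : X → ℂ) x ≠ 0) : J = ⊤ := by
  obtain ⟨s, hsJ, hs⟩ := exists_mem_forall_eq_sum_normSq hconj J f hf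
  refine J.eq_top_of_isUnit_mem hsJ (hunit s fun x => ?_)
  obtain ⟨i, hi⟩ := hzero x
  have hpos : 0 < ∑ i, normSq ((f i : X → ℂ) x) :=
    Finset.sum_pos' (fun i _ => normSq_nonneg _) ⟨i, Finset.mem_univ i, normSq_pos.2 hi⟩
  rw [hs x]
  exact_mod_cast hpos.ne'

end Conj

end Subring

theorem stmt_1_general {X : Type*} (A : Subring (X → ℂ))
    (hconst : ∀ c : ℂ, (fun _ : X => c) ∈ A)
    (hunit : ∀ f : A, (∀ x : X, (f : X → ℂ) x ≠ 0) → IsUnit f)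
    (hconj : ∀ f : A, (fun x : X => starRingEnd ℂ ((f : X → ℂ) x)) ∈ A)
    (n : ℕ) (f : Fin n → A) (g : A) :
    (⋂ i, {x : X | (f i : X → ℂ) x = 0}) ⊆ {x : X | (g : X → ℂ) x = 0}
      ↔ g ∈ (Ideal.span (Set.range f)).jacobson := by
  constructor
  · intro hZ
    refine Ideal.mem_sInf.2 fun M ⟨hIM, hM⟩ => ?_
    by_contra hgM
    obtain ⟨y, m, hm, hym⟩ := hM.exists_inv hgM
    refine hM.ne_top (A.ideal_eq_top_of_forall_exists_ne_zero hconj hunit M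
      (fun o : Option (Fin n) => o.elim m f) ?_ fun x => ?_)
    · rintro (_ | i)
      exacts [hm, hIM (Ideal.subset_span ⟨i, rfl⟩)]
    · by_contra! h0
      have hgx : (g : X → ℂ) x = 0 := hZ (Set.mem_iInter.2 fun i => h0 (some i))
      have hmx : (m : X → ℂ) x = 0 := h0 none
      have hyx := congrFun (congrArg Subtype.val hym) x
      simp [hgx, hmx] at hyx
  · intro hg x hx
    have hle : Ideal.span (Set.range f) ≤ RingHom.ker (A.evalAt x) :=
      Ideal.span_le.2 (Set.range_subset_iff.2 fun i => Set.mem_iInter.1 hx i)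
    exact Ideal.mem_sInf.1 hg ⟨hle, A.ker_evalAt_isMaximal hconst x⟩

theorem stmt_1 {X : Type*} [Nonempty X] (A : Subring (X → ℂ))
    (hconst : ∀ c : ℂ, (fun _ : X => c) ∈ A)
    (hunit : ∀ f : A, (∀ x : X, (f : X → ℂ) x ≠ 0) → IsUnit f)
    (hconj : ∀ f : A, (fun x : X => starRingEnd ℂ ((f : X → ℂ) x)) ∈ A)
    (n : ℕ) (f : Fin n → A) (g : A) :
    (⋂ i, {x : X | (f i : X → ℂ) x = 0}) ⊆ {x : X | (g : X → ℂ) x = 0}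
      ↔ g ∈ (Ideal.span (Set.range f)).jacobson :=
  stmt_1_general A hconst hunit hconj n f g
end

section
/- Let X be a topological space and let C(X,ℝ) be the ring of continuous real-valued functions on X. Then for all f₁, …, fₙ, g ∈ C(X,ℝ): Z(f₁) ∩ … ∩ Z(fₙ) ⊆ Z(g) if and only if g lies in the Jacobson radical of the ideal of C(X,ℝ) generated by f₁, …, fₙ. -/
/-!
If `g` vanishes on the common zero set of `f₁, …, fₙ`, then for every `y` the function
`h = y g + 1` has no common zero with `s = ∑ fᵢ²`, so `u = h² + s` is a unit of `C(X, ℝ)`;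
then `z = u⁻¹ h` satisfies `z (y g + 1) - 1 = -u⁻¹ s ∈ (f₁, …, fₙ)`, which is the elementwise
criterion for membership in the Jacobson radical. Conversely, each point `x` of the common zero
set gives the maximal ideal of functions vanishing at `x`, which contains the `fᵢ` and hence `g`.
-/

namespace ContinuousMap

variable {X : Type*} [TopologicalSpace X]

theorem ker_evalAlgHom_isMaximal {𝕜 : Type*} [Field 𝕜] [TopologicalSpace 𝕜]
    [IsTopologicalRing 𝕜] (x : X) : (RingHom.ker (evalAlgHom 𝕜 𝕜 x)).IsMaximal :=
  RingHom.ker_isMaximal_of_surjective _ fun c => ⟨const X c, rfl⟩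

theorem apply_eq_zero_of_mem_jacobson {𝕜 : Type*} [Field 𝕜] [TopologicalSpace 𝕜]
    [IsTopologicalRing 𝕜] {I : Ideal C(X, 𝕜)} {g : C(X, 𝕜)} (hg : g ∈ I.jacobson) {x : X}
    (hI : ∀ f ∈ I, f x = 0) : g x = 0 :=
  Ideal.mem_sInf.1 hg ⟨hI, ker_evalAlgHom_isMaximal x⟩

theorem mem_jacobson_of_forall_apply_eq_zero {I : Ideal C(X, ℝ)} {s g : C(X, ℝ)} (hsI : s ∈ I)
    (hs : ∀ x, 0 ≤ s x) (hg : ∀ x, s x = 0 → g x = 0) : g ∈ I.jacobson := by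
  refine Ideal.mem_jacobson_iff.2 fun y => ?_
  set h := y * g + 1
  have h_ne_zero : ∀ x, h x * h x + s x ≠ 0 := fun x => by
    by_cases hsx : s x = 0
    · simp [h, hg x hsx, hsx]
    · nlinarith [mul_self_nonneg (h x), lt_of_le_of_ne (hs x) (Ne.symm hsx)]
  obtain ⟨u, hu⟩ : IsUnit (h * h + s) := (isUnit_iff_forall_ne_zero _).2 h_ne_zero
  refine ⟨↑u⁻¹ * h, ?_⟩
  have hz_sub_one : ↑u⁻¹ * h * y * g + ↑u⁻¹ * h - 1 = -(↑u⁻¹ * s) := by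
    linear_combination u.inv_mul - ↑u⁻¹ * hu
  rw [hz_sub_one]
  exact I.neg_mem (I.mul_mem_left _ hsI)

theorem sum_mul_self_apply_eq_zero_iff {ι : Type*} (t : Finset ι) (f : ι → C(X, ℝ)) (x : X) :
    (∑ i ∈ t, f i * f i) x = 0 ↔ ∀ i ∈ t, f i x = 0 := by
  simp only [coe_sum, Finset.sum_apply, mul_apply]
  rw [Finset.sum_eq_zero_iff_of_nonneg fun i _ => mul_self_nonneg (f i x)]
  simp only [mul_self_eq_zero]

end ContinuousMap

theorem stmt_2 {X : Type*} [TopologicalSpace X]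
    (n : ℕ) (f : Fin n → C(X, ℝ)) (g : C(X, ℝ)) :
    (⋂ i, {x : X | f i x = 0}) ⊆ {x : X | g x = 0}
      ↔ g ∈ (Ideal.span (Set.range f)).jacobson := by
  constructor
  · intro hZ
    have hs_mem : ∑ i, f i * f i ∈ Ideal.span (Set.range f) :=
      Ideal.sum_mem _ fun i _ => Ideal.mul_mem_left _ _ (Ideal.subset_span ⟨i, rfl⟩)
    have hs_nonneg (x : X) : 0 ≤ (∑ i, f i * f i) x := by
      simpa using Finset.sum_nonneg fun i _ => mul_self_nonneg (f i x)
    refine ContinuousMap.mem_jacobson_of_forall_apply_eq_zero hs_mem hs_nonneg fun x hx => hZ ?_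
    simpa using (ContinuousMap.sum_mul_self_apply_eq_zero_iff _ f x).1 hx
  · intro hg x hx
    have hle : Ideal.span (Set.range f) ≤ RingHom.ker (ContinuousMap.evalAlgHom ℝ ℝ x) :=
      Ideal.span_le.2 (Set.range_subset_iff.2 fun i => Set.mem_iInter.1 hx i)
    exact ContinuousMap.apply_eq_zero_of_mem_jacobson hg fun f' hf' => hle hf'
end

section
/- Let K be a field of characteristic ≠ 2 equipped with a nontrivial valuation v : K → Γ₀ into a linearly ordered commutative group with zero (i.e. there is x ∈ K with v(x) ≠ 0 and v(x) ≠ 1), and give K the valuation topology. Let X be a topological space and let C(X,K) be the ring of continuous functions X → K. Then for all f₁, …, fₙ, g ∈ C(X,K): Z(f₁) ∩ … ∩ Z(fₙ) ⊆ Z(g) if and only if g lies in the Jacobson radical of the ideal of C(X,K) generated by f₁, …, fₙ. -/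
/-!
If every common zero of `f₁, …, fₙ` is a zero of `g`, then for each `y` the functions
`1 + y g, f₁, …, fₙ` have no common zero. Because the valuation is ultrametric, the set `Sⱼ` where
the `j`-th of finitely many functions `hⱼ` has the largest valuation is clopen, and `hⱼ` has no zero
on it. With `qⱼ` the inverse of `hⱼ` on `Sⱼ`, extended by zero, the product `∏ⱼ (1 - qⱼ hⱼ)`
vanishes, so `1` lies in the ideal generated by the `hⱼ`. Thus `1 + y g` is invertible modulo
`(f₁, …, fₙ)` for every `y`, which says that `g` is in the Jacobson radical. Conversely, the kernel
of evaluation at a point is a maximal ideal.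
-/

open Set

theorem Ideal.one_sub_prod_one_sub_mem {R ι : Type*} [CommRing R] {I : Ideal R} {s : Finset ι}
    {e : ι → R} (he : ∀ i ∈ s, e i ∈ I) : 1 - ∏ i ∈ s, (1 - e i) ∈ I := by
  rw [← Ideal.Quotient.eq_zero_iff_mem, map_sub, map_prod]
  simp +contextual [Ideal.Quotient.eq_zero_iff_mem.mpr (he _ _)]

section TopologicalField

variable {K : Type*} [Field K] [TopologicalSpace K] {X : Type*} [TopologicalSpace X]

theorem ContinuousMap.exists_mul_eq_one_on_of_isClopen [ContinuousInv₀ K] (u : C(X, K))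
    {T : Set X} (hT : IsClopen T) (hu : ∀ x ∈ T, u x ≠ 0) :
    ∃ q : C(X, K), ∀ x ∈ T, q x * u x = 1 := by
  refine ⟨⟨T.indicator fun x ↦ (u x)⁻¹, continuous_indicator (by simp [hT.frontier_eq]) ?_⟩,
    fun x hx ↦ ?_⟩
  · rw [hT.isClosed.closure_eq]
    exact u.continuous.continuousOn.inv₀ hu
  · simp [hx, hu x hx]

theorem isOpen_setOf_ne_zero_and_div_mem [T1Space K] [ContinuousMul K] [ContinuousInv₀ K]
    {a b : X → K} (ha : Continuous a) (hb : Continuous b) {U : Set K} (hU : IsOpen U) :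
    IsOpen {x | b x ≠ 0 ∧ a x / b x ∈ U} :=
  (ha.continuousOn.div hb.continuousOn fun _ h ↦ h).isOpen_inter_preimage
    (hb.isOpen_preimage _ isOpen_compl_singleton) hU

theorem ContinuousMap.apply_eq_zero_of_mem_jacobson_span [IsTopologicalRing K]
    {s : Set C(X, K)} {g : C(X, K)} {x : X} (hs : ∀ u ∈ s, u x = 0)
    (hg : g ∈ (Ideal.span s).jacobson) : g x = 0 := by
  let ev : C(X, K) →+* K := (Pi.evalRingHom (fun _ : X ↦ K) x).comp ContinuousMap.coeFnRingHom
  have hmax : (RingHom.ker ev).IsMaximal :=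
    RingHom.ker_isMaximal_of_surjective ev fun c ↦ ⟨ContinuousMap.const X c, rfl⟩
  have hle : Ideal.span s ≤ RingHom.ker ev := Ideal.span_le.mpr hs
  exact Ideal.mem_sInf.mp hg ⟨hle, hmax⟩

end TopologicalField

section Valued

variable {K : Type*} [Field K] {Γ₀ : Type*} [LinearOrderedCommGroupWithZero Γ₀] [Valued K Γ₀]
  {X : Type*} [TopologicalSpace X]

theorem Valued.ne_zero_of_forall_valuation_le {ι : Type*} {a : ι → K} (hnz : ∃ i, a i ≠ 0)
    {j : ι} (hj : ∀ i, Valued.v (a i) ≤ Valued.v (a j)) : a j ≠ 0 :=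
  let ⟨k, hk⟩ := hnz
  (Valuation.pos_iff _).mp (((Valuation.pos_iff _).mpr hk).trans_le (hj k))

theorem Valued.isOpen_setOf_valuation_lt {a b : X → K} (ha : Continuous a) (hb : Continuous b) :
    IsOpen {x | Valued.v (a x) < Valued.v (b x)} := by
  have hball : IsOpen {z : K | Valued.v z < 1} := by
    simpa [Valuation.restrict_lt_one_iff] using Valued.isOpen_ball K 1
  convert isOpen_setOf_ne_zero_and_div_mem ha hb hball using 1
  ext x
  by_cases hbx : b x = 0
  · simp [hbx]
  · simp [hbx, div_lt_one₀ ((Valuation.pos_iff Valued.v).mpr hbx)]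

theorem Valued.isOpen_setOf_ne_zero_valuation_le {a b : X → K} (ha : Continuous a)
    (hb : Continuous b) : IsOpen {x | b x ≠ 0 ∧ Valued.v (a x) ≤ Valued.v (b x)} := by
  convert isOpen_setOf_ne_zero_and_div_mem ha hb (Valued.isOpen_integer K) using 3 with x
  refine and_congr_right fun hbx ↦ ?_
  simp [Valuation.mem_integer_iff, div_le_one₀ ((Valuation.pos_iff Valued.v).mpr hbx)]

theorem Valued.isClopen_setOf_forall_valuation_le {ι : Type*} [Finite ι] {h : ι → X → K}
    (hc : ∀ i, Continuous (h i)) (hnz : ∀ x, ∃ i, h i x ≠ 0) (j : ι) :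
    IsClopen {x | ∀ i, Valued.v (h i x) ≤ Valued.v (h j x)} := by
  constructor
  · have hcompl : {x | ∀ i, Valued.v (h i x) ≤ Valued.v (h j x)}ᶜ =
        ⋃ i, {x | Valued.v (h j x) < Valued.v (h i x)} := by
      ext x; simp
    rw [← isOpen_compl_iff, hcompl]
    exact isOpen_iUnion fun i ↦ isOpen_setOf_valuation_lt (hc j) (hc i)
  · have heq : {x | ∀ i, Valued.v (h i x) ≤ Valued.v (h j x)} =
        ⋂ i, {x | h j x ≠ 0 ∧ Valued.v (h i x) ≤ Valued.v (h j x)} := by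
      ext x
      simp only [mem_ofPred_eq, mem_iInter]
      exact ⟨fun hx i ↦ ⟨ne_zero_of_forall_valuation_le (hnz x) hx, hx i⟩, fun hx i ↦ (hx i).2⟩
    rw [heq]
    exact isOpen_iInter_of_finite fun i ↦ isOpen_setOf_ne_zero_valuation_le (hc i) (hc j)

theorem ContinuousMap.span_range_eq_top_of_forall_exists_ne_zero {ι : Type*} [Fintype ι]
    (h : ι → C(X, K)) (hnz : ∀ x, ∃ i, h i x ≠ 0) : Ideal.span (range h) = ⊤ := by
  choose q hq using fun j ↦ (h j).exists_mul_eq_one_on_of_isClopen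
    (Valued.isClopen_setOf_forall_valuation_le (fun i ↦ (h i).continuous) hnz j)
    fun x hx ↦ Valued.ne_zero_of_forall_valuation_le (hnz x) hx
  have hprod : ∏ j, (1 - q j * h j) = 0 := by
    ext x
    have : Nonempty ι := ⟨(hnz x).choose⟩
    obtain ⟨j, hj⟩ := Finite.exists_max fun j ↦ Valued.v (h j x)
    simpa [ContinuousMap.prod_apply] using
      Finset.prod_eq_zero (Finset.mem_univ j) (by simp [hq j x hj])
  have hmem : 1 - ∏ j, (1 - q j * h j) ∈ Ideal.span (range h) :=
    Ideal.one_sub_prod_one_sub_mem fun j _ ↦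
      Ideal.mul_mem_left _ (q j) (Ideal.subset_span ⟨j, rfl⟩)
  rw [Ideal.eq_top_iff_one]
  simpa [hprod] using hmem

theorem ContinuousMap.mem_jacobson_span_range_of_forall_eq_zero {n : ℕ} (f : Fin n → C(X, K))
    {g : C(X, K)} (hZ : ∀ x, (∀ i, f i x = 0) → g x = 0) :
    g ∈ (Ideal.span (range f)).jacobson := by
  refine Ideal.mem_jacobson_iff.mpr fun y ↦ ?_
  have hnz : ∀ x, ∃ i, (Fin.cons (1 + y * g) f : Fin (n + 1) → C(X, K)) i x ≠ 0 := by
    intro x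
    by_cases hx : ∃ i, f i x ≠ 0
    · obtain ⟨i, hi⟩ := hx
      exact ⟨i.succ, by simpa using hi⟩
    · exact ⟨0, by simp [hZ x (not_exists_not.mp hx)]⟩
  have hone := (Ideal.eq_top_iff_one _).mp (span_range_eq_top_of_forall_exists_ne_zero _ hnz)
  rw [Fin.range_cons, Ideal.mem_span_insert] at hone
  obtain ⟨a, r, hr, hone⟩ := hone
  refine ⟨a, ?_⟩
  convert neg_mem hr using 1
  linear_combination -hone

end Valued

theorem stmt_4_general {K : Type*} [Field K] {Γ₀ : Type*}
    [LinearOrderedCommGroupWithZero Γ₀] [Valued K Γ₀]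
    {X : Type*} [TopologicalSpace X]
    (n : ℕ) (f : Fin n → C(X, K)) (g : C(X, K)) :
    (⋂ i, {x : X | f i x = 0}) ⊆ {x : X | g x = 0}
      ↔ g ∈ (Ideal.span (Set.range f)).jacobson := by
  refine ⟨fun hZ ↦ ?_, fun hg x hx ↦ ?_⟩
  · exact ContinuousMap.mem_jacobson_span_range_of_forall_eq_zero f fun x hx ↦
      hZ (mem_iInter.mpr hx)
  · refine ContinuousMap.apply_eq_zero_of_mem_jacobson_span ?_ hg
    rintro _ ⟨i, rfl⟩
    exact mem_iInter.mp hx i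

theorem stmt_4 {K : Type*} [Field K] {Γ₀ : Type*}
    [LinearOrderedCommGroupWithZero Γ₀] [Valued K Γ₀]
    (hchar : (2 : K) ≠ 0)
    (hnontriv : ∃ x : K, Valued.v x ≠ 0 ∧ Valued.v x ≠ 1)
    {X : Type*} [TopologicalSpace X]
    (n : ℕ) (f : Fin n → C(X, K)) (g : C(X, K)) :
    (⋂ i, {x : X | f i x = 0}) ⊆ {x : X | g x = 0}
      ↔ g ∈ (Ideal.span (Set.range f)).jacobson :=
  stmt_4_general (Γ₀ := Γ₀) n f g
end

section
/- Let K be a field that is not algebraically closed. Then there exist polynomials u(x,y) and v(x,y) in two variables over K such that for all a, b ∈ K: a·u(a,b) + b·v(a,b) = 0 if and only if a = 0 and b = 0. -/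
/-!
Take a polynomial `p` of positive degree over `K` without roots in `K`, and let `H` be its
homogenization of degree `n = deg p`. For `b ≠ 0` we have `H(a, b) = bⁿ p(a / b) ≠ 0`, and
`H(a, 0)` is the leading coefficient of `p` times `aⁿ`, so `H` vanishes only at the origin.
Having zero constant term, `H` lies in the ideal `(x, y)`, i.e. `H = x u + y v`.
-/

namespace MvPolynomial

theorem exists_eq_X_zero_mul_add_X_one_mul {R : Type*} [CommSemiring R]
    {f : MvPolynomial (Fin 2) R} (h : constantCoeff f = 0) :
    ∃ u v : MvPolynomial (Fin 2) R, f = X 0 * u + X 1 * v := by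
  have hmem : f ∈ Ideal.span (X '' {0, 1} : Set (MvPolynomial (Fin 2) R)) := by
    rw [mem_ideal_span_X_image]
    intro m hm
    by_contra! H
    obtain rfl : m = 0 := by
      simp only [Set.mem_insert_iff, Set.mem_singleton_iff, forall_eq_or_imp, forall_eq] at H
      ext i; fin_cases i; exacts [H.1, H.2]
    exact mem_support_iff.mp hm (by rwa [← constantCoeff_eq])
  rw [Set.image_pair, Ideal.mem_span_pair] at hmem
  obtain ⟨u, v, huv⟩ := hmem
  exact ⟨u, v, by rw [← huv, mul_comm u, mul_comm v]⟩

end MvPolynomial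

namespace Polynomial

theorem constantCoeff_homogenize {R : Type*} [CommSemiring R] (p : R[X]) {n : ℕ} (hn : n ≠ 0) :
    MvPolynomial.constantCoeff (p.homogenize n) = 0 := by
  simp [MvPolynomial.constantCoeff_eq, coeff_homogenize, hn.symm]

variable {K : Type*} [Field K]

theorem eval_homogenize_of_eq_zero (p : K[X]) (n : ℕ) {x : Fin 2 → K} (hx : x 1 = 0) :
    MvPolynomial.eval x (p.homogenize n) = p.coeff n * x 0 ^ n := by
  rw [homogenize, MvPolynomial.eval_sum, Finset.sum_eq_single (n, 0)]
  · simp [MvPolynomial.eval_monomial, Finsupp.prod_fintype]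
  · rintro ⟨k, l⟩ hkl hne
    have hl : l ≠ 0 := by rintro rfl; simp_all
    simp [MvPolynomial.eval_monomial, Finsupp.prod_fintype, hx, hl]
  · simp

theorem eval_homogenize_natDegree_ne_zero {p : K[X]} (hp : ∀ a, ¬ p.IsRoot a)
    {x : Fin 2 → K} (hx : x ≠ 0) : MvPolynomial.eval x (p.homogenize p.natDegree) ≠ 0 := by
  by_cases hx1 : x 1 = 0
  · have hx0 : x 0 ≠ 0 := fun hx0 ↦ hx <| by ext i; fin_cases i; exacts [hx0, hx1]
    have hp0 : p ≠ 0 := by rintro rfl; exact hp 0 (by simp)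
    rw [eval_homogenize_of_eq_zero p _ hx1, coeff_natDegree]
    exact mul_ne_zero (leadingCoeff_ne_zero.mpr hp0) (pow_ne_zero _ hx0)
  · rw [eval_homogenize le_rfl x hx1]
    exact mul_ne_zero (hp _) (pow_ne_zero _ hx1)

end Polynomial

open Polynomial in
theorem stmt_5 {K : Type*} [Field K] (hK : ¬ IsAlgClosed K) :
    ∃ u v : MvPolynomial (Fin 2) K,
      ∀ a b : K,
        a * MvPolynomial.eval ![a, b] u + b * MvPolynomial.eval ![a, b] v = 0
          ↔ a = 0 ∧ b = 0 := by
  obtain ⟨p, -, hirr, hroot⟩ :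
      ∃ p : K[X], p.Monic ∧ Irreducible p ∧ ∀ a, ¬ p.IsRoot a := by
    by_contra! h
    exact hK (IsAlgClosed.of_exists_root K h)
  obtain ⟨u, v, huv⟩ := MvPolynomial.exists_eq_X_zero_mul_add_X_one_mul
    (p.constantCoeff_homogenize hirr.natDegree_pos.ne')
  refine ⟨u, v, fun a b ↦ ⟨fun h ↦ ?_, fun ⟨ha, hb⟩ ↦ by simp [ha, hb]⟩⟩
  have hH : MvPolynomial.eval ![a, b] (p.homogenize p.natDegree) = 0 := by simpa [huv] using h
  by_contra hab
  exact eval_homogenize_natDegree_ne_zero hroot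
    (fun h0 ↦ hab ⟨congr_fun h0 0, congr_fun h0 1⟩) hH
end

section
/- Let K be a field of characteristic ≠ 2 equipped with a valuation v : K → Γ₀ into a linearly ordered commutative group with zero, and give K the valuation topology (and K × K the product topology). Define u, w : K × K → K by: u(x,y) = x + y if v(x − y) < v(x + y) and u(x,y) = x − y otherwise; w(x,y) = x + y if v(x − y) < v(x + y) and w(x,y) = y − x otherwise. Then u and w are continuous, and for all x, y ∈ K: x·u(x,y) + y·w(x,y) = 0 if and only if x = 0 and y = 0. -/
/-!
With `s = x + y` and `d = x - y`, `u` picks whichever of `s`, `d` has strictly larger valuation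
(`d` on ties), and `x * u + y * w = u ^ 2`; so the identity says `u = 0`, which forces
`s = d = 0`, hence `x = y = 0` as `2 ≠ 0`. For continuity: `v` is locally constant away from
its zero set, so `{v d < v s}` is open and on its frontier `v s = v d = 0`; there both branches
of `u` and `w` vanish, so the piecewise functions glue continuously.
-/

open Filter Topology

namespace Valued

variable {Γ₀ X : Type*} [LinearOrderedCommGroupWithZero Γ₀] [TopologicalSpace X]

section Ring

variable {R : Type*} [Ring R] [Valued R Γ₀]

theorem isOpen_setOf_lt_apply (r : R) : IsOpen {y : R | v y < v r} := by
  simpa only [Valuation.restrict_lt_iff] using isOpen_ball R (v.restrict r)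

theorem isOpen_setOf_le_apply {r : R} (hr : v r ≠ 0) : IsOpen {y : R | v y ≤ v r} := by
  simpa only [Valuation.restrict_le_iff] using
    isOpen_closedBall R (r := v.restrict r) (by simpa [← zero_lt_iff] using hr)

variable {f g : X → R}

theorem isOpen_setOf_lt_of_continuous (hf : Continuous f) (hg : Continuous g) :
    IsOpen {x | v (f x) < v (g x)} := by
  refine isOpen_iff_mem_nhds.2 fun a ha => ?_
  filter_upwards [hg.continuousAt.preimage_mem_nhds (locally_const (ne_zero_of_lt ha)),
    hf.continuousAt.preimage_mem_nhds ((isOpen_setOf_lt_apply (g a)).mem_nhds ha)]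
    with x hgx hfx
  exact hfx.trans_eq hgx.symm

theorem valuation_eq_zero_of_mem_frontier_setOf_lt (hf : Continuous f) (hg : Continuous g)
    {a : X} (ha : a ∈ frontier {x | v (f x) < v (g x)}) : v (f a) = 0 ∧ v (g a) = 0 := by
  rw [(isOpen_setOf_lt_of_continuous hf hg).frontier_eq] at ha
  obtain ⟨ha_closure, ha_not⟩ := ha
  have hga : v (g a) ≤ v (f a) := not_lt.1 ha_not
  have hfa : v (f a) = 0 := by
    by_contra hv
    -- near `a` we have `v ∘ g ≤ v (f a) = v ∘ f`, which keeps the set away from `a`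
    obtain ⟨x, ⟨hfx, hgx⟩, hx⟩ := mem_closure_iff_nhds.1 ha_closure _ <| inter_mem
      (hf.continuousAt.preimage_mem_nhds (locally_const hv))
      (hg.continuousAt.preimage_mem_nhds ((isOpen_setOf_le_apply hv).mem_nhds hga))
    exact (hx.trans_le (hgx.trans_eq hfx.symm)).false
  exact ⟨hfa, le_zero_iff.1 (hga.trans_eq hfa)⟩

end Ring

theorem continuous_if_lt {K : Type*} [DivisionRing K] [Valued K Γ₀] {f g h : X → K}
    (hf : Continuous f) (hg : Continuous g) (hh : Continuous h)
    (hvh : ∀ x, v (h x) = v (f x)) :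
    Continuous fun x => if v (f x) < v (g x) then g x else h x := by
  refine hg.if (fun a ha => ?_) hh
  obtain ⟨hfa, hga⟩ := valuation_eq_zero_of_mem_frontier_setOf_lt hf hg ha
  rw [(Valuation.zero_iff v).1 hga, (Valuation.zero_iff v).1 ((hvh a).trans hfa)]

end Valued

theorem mul_ite_add_mul_ite_eq_sq {R : Type*} [CommRing R] (p : Prop) [Decidable p] (x y : R) :
    x * (if p then x + y else x - y) + y * (if p then x + y else y - x) =
      (if p then x + y else x - y) ^ 2 := by
  split_ifs <;> ring

theorem ite_add_sub_eq_zero_iff {K Γ₀ : Type*} [Field K] [LinearOrderedCommGroupWithZero Γ₀]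
    (v : Valuation K Γ₀) (h2 : (2 : K) ≠ 0) (x y : K) :
    (if v (x - y) < v (x + y) then x + y else x - y) = 0 ↔ x = 0 ∧ y = 0 := by
  refine ⟨fun h => ?_, fun ⟨hx, hy⟩ => by simp [hx, hy]⟩
  split_ifs at h with hlt
  · rw [h, map_zero] at hlt
    exact absurd hlt not_lt_zero
  · rw [h, map_zero, not_lt, le_zero_iff, Valuation.zero_iff] at hlt
    have h2x : 2 * x = 0 := by linear_combination hlt + h
    have hx : x = 0 := (mul_eq_zero.1 h2x).resolve_left h2
    exact ⟨hx, by linear_combination hx - h⟩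

theorem stmt_7 {K : Type*} [Field K] {Γ₀ : Type*}
    [LinearOrderedCommGroupWithZero Γ₀] [Valued K Γ₀]
    (hchar : (2 : K) ≠ 0)
    (u w : K × K → K)
    (hu : u = fun q => if Valued.v (q.1 - q.2) < Valued.v (q.1 + q.2)
        then q.1 + q.2 else q.1 - q.2)
    (hw : w = fun q => if Valued.v (q.1 - q.2) < Valued.v (q.1 + q.2)
        then q.1 + q.2 else q.2 - q.1) :
    Continuous u ∧ Continuous w ∧
      ∀ x y : K, x * u (x, y) + y * w (x, y) = 0 ↔ x = 0 ∧ y = 0 := by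
  have hsum : Continuous fun q : K × K => q.1 + q.2 := by fun_prop
  have hdiff : Continuous fun q : K × K => q.1 - q.2 := by fun_prop
  subst hu hw
  refine ⟨Valued.continuous_if_lt hdiff hsum hdiff fun _ => rfl,
    Valued.continuous_if_lt hdiff hsum (by fun_prop) fun q => Valuation.map_sub_swap _ _ _,
    fun x y => ?_⟩
  rw [mul_ite_add_mul_ite_eq_sq, sq_eq_zero_iff, ite_add_sub_eq_zero_iff _ hchar]
end

section
/- Let K be a topological field and O a subring of K whose fraction field is K. Assume there exists a nonzero ε ∈ O lying in the Jacobson radical of the ring O such that the set ε·O = {ε·a : a ∈ O} is a neighborhood of 0 in K. Then for every topological space X, every continuous function f : X → K, and every x₀ ∈ X with f(x₀) ≠ 0, there is a neighborhood U of x₀ in X such that for all x ∈ U, the element f(x)/f(x₀) is a unit of O (that is, f(x)/f(x₀) ∈ O and f(x₀)/f(x) ∈ O). -/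
/-! If `ε` lies in the Jacobson radical of `O`, every element of `1 + εO` is a unit of `O`.
Since `εO` is a neighbourhood of `0`, continuity of `x ↦ f x / f x₀ - 1` (which vanishes at `x₀`)
puts `f x / f x₀` in `1 + εO` for `x` near `x₀`. -/

open Filter Topology

theorem Subring.inv_mem_of_isUnit {K : Type*} [Field K] {O : Subring K} {u : O}
    (hu : IsUnit u) : (u : K)⁻¹ ∈ O := by
  obtain ⟨v, rfl⟩ := hu
  rw [← O.coe_subtype, ← map_units_inv]
  exact (↑v⁻¹ : O).2

theorem Subring.one_add_mul_mem_and_inv_mem_of_mem_jacobson_bot {K : Type*} [Field K]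
    {O : Subring K} {ε : O} (hε : ε ∈ Ideal.jacobson (⊥ : Ideal O)) (a : O) :
    (1 + ε * a : K) ∈ O ∧ (1 + ε * a : K)⁻¹ ∈ O := by
  have hunit : IsUnit (ε * a + 1) := Ideal.mem_jacobson_bot.1 hε a
  have hcoe : (1 + ε * a : K) = ((ε * a + 1 : O) : K) := by push_cast; ring
  rw [hcoe]
  exact ⟨(ε * a + 1 : O).2, Subring.inv_mem_of_isUnit hunit⟩

theorem stmt_8_general {K : Type*} [Field K] [TopologicalSpace K] [IsTopologicalDivisionRing K]
    (O : Subring K)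
    (ε : O) (hjac : ε ∈ Ideal.jacobson (⊥ : Ideal O))
    (hnhds : {x : K | ∃ a : O, x = (ε : K) * (a : K)} ∈ nhds (0 : K)) :
    ∀ (X : Type*) [TopologicalSpace X] (f : X → K), Continuous f →
      ∀ x₀ : X, f x₀ ≠ 0 →
        ∃ U ∈ nhds x₀, ∀ x ∈ U, f x / f x₀ ∈ O ∧ f x₀ / f x ∈ O := by
  intro X _ f hf x₀ hx₀
  have hlim : Tendsto (fun x => f x / f x₀ - 1) (𝓝 x₀) (𝓝 0) := by
    simpa [div_self hx₀] using (show Continuous fun x => f x / f x₀ - 1 by fun_prop).tendsto x₀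
  refine ⟨_, hlim hnhds, fun x ⟨a, ha⟩ => ?_⟩
  have hx : f x / f x₀ = 1 + ε * a := by rw [← ha]; ring
  rw [← inv_div (f x) (f x₀), hx]
  exact Subring.one_add_mul_mem_and_inv_mem_of_mem_jacobson_bot hjac a

theorem stmt_8 {K : Type*} [Field K] [TopologicalSpace K] [IsTopologicalDivisionRing K]
    (O : Subring K) [IsFractionRing O K]
    (ε : O) (hε : ε ≠ 0) (hjac : ε ∈ Ideal.jacobson (⊥ : Ideal O))
    (hnhds : {x : K | ∃ a : O, x = (ε : K) * (a : K)} ∈ nhds (0 : K)) :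
    ∀ (X : Type*) [TopologicalSpace X] (f : X → K), Continuous f →
      ∀ x₀ : X, f x₀ ≠ 0 →
        ∃ U ∈ nhds x₀, ∀ x ∈ U, f x / f x₀ ∈ O ∧ f x₀ / f x ∈ O :=
  stmt_8_general O ε hjac hnhds
end

section
/- Let K be a field and let u, v : K × K → K be functions such that for all a, b ∈ K: a·u(a,b) + b·v(a,b) = 0 if and only if a = 0 and b = 0. Let X be a set and let A be a subring of the ring of all functions X → K (with pointwise operations) such that for all f, g ∈ A the functions x ↦ u(f(x),g(x)) and x ↦ v(f(x),g(x)) belong to A. Then for all f₁, …, fₙ ∈ A there exist g₁, …, gₙ ∈ A such that Z(f₁) ∩ … ∩ Z(fₙ) = Z(g₁f₁ + … + gₙfₙ). -/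
/-!
The hypothesis on `u, v` says that `(a, b) ↦ a u(a,b) + b v(a,b)` vanishes exactly at the origin, so
for `f, g ∈ A` the combination `u(f,g) f + v(f,g) g ∈ A` has zero set `Z(f) ∩ Z(g)`. Merging the
functions one at a time, each step multiplying the previous coefficients by `v(f,g)`, gives the
statement for any finite family.
-/

open Finset

namespace Subring

variable {X K : Type*} [CommRing K] (A : Subring (X → K))

theorem exists_zeroSet_add_eq_inter (u v : K × K → K)
    (huv : ∀ a b : K, a * u (a, b) + b * v (a, b) = 0 ↔ a = 0 ∧ b = 0)
    (hu : ∀ f g : A, (fun x : X => u ((f : X → K) x, (g : X → K) x)) ∈ A)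
    (hv : ∀ f g : A, (fun x : X => v ((f : X → K) x, (g : X → K) x)) ∈ A) (f g : A) :
    ∃ a b : A, {x | ((a * f + b * g : A) : X → K) x = 0}
      = {x | (f : X → K) x = 0} ∩ {x | (g : X → K) x = 0} := by
  refine ⟨⟨_, hu f g⟩, ⟨_, hv f g⟩, ?_⟩
  ext x
  simp only [Set.mem_ofPred_eq, Set.mem_inter_iff, ← huv, coe_add, coe_mul, Pi.add_apply,
    Pi.mul_apply, mul_comm]

theorem exists_iInter_zeroSet_eq_zeroSet_sum
    (h : ∀ f g : A, ∃ a b : A, {x | ((a * f + b * g : A) : X → K) x = 0}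
      = {x | (f : X → K) x = 0} ∩ {x | (g : X → K) x = 0})
    {ι : Type*} (s : Finset ι) (f : ι → A) :
    ∃ c : ι → A, (⋂ i ∈ s, {x | (f i : X → K) x = 0})
      = {x | ((∑ i ∈ s, c i * f i : A) : X → K) x = 0} := by
  classical
  induction s using Finset.induction_on with
  | empty => exact ⟨0, by simp⟩
  | insert i s hi ih =>
    obtain ⟨c, hc⟩ := ih
    obtain ⟨a, b, hab⟩ := h (f i) (∑ j ∈ s, c j * f j)
    refine ⟨Function.update (fun j => b * c j) i a, ?_⟩
    have hsum : ∑ j ∈ insert i s, Function.update (fun j => b * c j) i a j * f j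
        = a * f i + b * ∑ j ∈ s, c j * f j := by
      rw [sum_insert hi, Function.update_self, mul_sum]
      congr 1
      refine sum_congr rfl fun j hj => ?_
      rw [Function.update_of_ne (ne_of_mem_of_not_mem hj hi), mul_assoc]
    rw [hsum, hab, ← hc, Finset.set_biInter_insert]

end Subring

theorem stmt_9 {K : Type*} [Field K] (u v : K × K → K)
    (huv : ∀ a b : K, a * u (a, b) + b * v (a, b) = 0 ↔ a = 0 ∧ b = 0)
    {X : Type*} (A : Subring (X → K))
    (hu : ∀ f g : A, (fun x : X => u ((f : X → K) x, (g : X → K) x)) ∈ A)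
    (hv : ∀ f g : A, (fun x : X => v ((f : X → K) x, (g : X → K) x)) ∈ A)
    (n : ℕ) (f : Fin n → A) :
    ∃ g : Fin n → A,
      (⋂ i, {x : X | (f i : X → K) x = 0})
        = {x : X | ((∑ i, g i * f i : A) : X → K) x = 0} := by
  simpa using A.exists_iInter_zeroSet_eq_zeroSet_sum
    (A.exists_zeroSet_add_eq_inter u v huv hu hv) Finset.univ f
end

section
/- Let K be a field and let u, v : K × K → K be functions such that for all a, b ∈ K: a·u(a,b) + b·v(a,b) = 0 if and only if a = 0 and b = 0. Let X be a nonempty set and let A be a subring of the ring of all functions X → K (with pointwise operations) such that for all f, g ∈ A the functions x ↦ u(f(x),g(x)) and x ↦ v(f(x),g(x)) belong to A, and such that every f ∈ A with no zero on X is invertible in A. Then for all f₁, …, fₙ, g ∈ A: if Z(f₁) ∩ … ∩ Z(fₙ) ⊆ Z(g), then g lies in the Jacobson radical of the ideal of A generated by f₁, …, fₙ. -/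
/-!
Applying the hypothesis on `u, v` pointwise to `f, g ∈ A` gives `f * U + g * V ∈ (f, g)` whose zero
set is `Z(f) ∩ Z(g)`; iterating, some `h` in the ideal `I = (f₁, …, fₙ)` has `Z(h) = ⋂ Z(fᵢ) ⊆ Z(g)`.
For any `y ∈ A`, the same construction applied to `h` and `1 + y g` yields `h a + (1 + y g) b` with
no zero on `X`, hence a unit `k`; so `1 + y g` times `k⁻¹ b` is `1` modulo `I`, which is the
element-wise criterion for `g ∈ Jac(I)`.
-/

section ZeroSets

variable {K : Type*} [CommRing K] {u v : K × K → K}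
  (huv : ∀ a b : K, a * u (a, b) + b * v (a, b) = 0 ↔ a = 0 ∧ b = 0)
  {X : Type*} {A : Subring (X → K)}
  (hu : ∀ f g : A, (fun x : X => u ((f : X → K) x, (g : X → K) x)) ∈ A)
  (hv : ∀ f g : A, (fun x : X => v ((f : X → K) x, (g : X → K) x)) ∈ A)
include huv hu hv

theorem exists_zeroSet_mul_add_mul_eq_inter (f g : A) :
    ∃ a b : A, {x | ((f * a + g * b : A) : X → K) x = 0} =
      {x | (f : X → K) x = 0} ∩ {x | (g : X → K) x = 0} :=
  ⟨⟨_, hu f g⟩, ⟨_, hv f g⟩, Set.ext fun _ => huv _ _⟩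

theorem exists_mem_span_zeroSet_eq_iInter {m : ℕ} (F : Fin m → A) :
    ∃ h ∈ Ideal.span (Set.range F),
      {x | (h : X → K) x = 0} = ⋂ i, {x | (F i : X → K) x = 0} := by
  induction m with
  | zero => exact ⟨0, Ideal.zero_mem _, by simp⟩
  | succ k ih =>
    obtain ⟨h, hmem, hZ⟩ := ih (F ∘ Fin.succ)
    obtain ⟨a, b, hab⟩ := exists_zeroSet_mul_add_mul_eq_inter huv hu hv h (F 0)
    have hspan : Ideal.span (Set.range (F ∘ Fin.succ)) ≤ Ideal.span (Set.range F) :=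
      Ideal.span_mono (Set.range_comp_subset_range _ _)
    refine ⟨h * a + F 0 * b, ?_, ?_⟩
    · exact Ideal.add_mem _ (Ideal.mul_mem_right _ _ (hspan hmem))
        (Ideal.mul_mem_right _ _ (Ideal.subset_span ⟨0, rfl⟩))
    · ext x
      simp only [hab, hZ, Set.mem_inter_iff, Set.mem_iInter, Set.mem_ofPred_eq, Fin.forall_fin_succ,
        Function.comp_apply]
      exact and_comm

theorem mem_jacobson_of_zeroSet_subset [Nontrivial K]
    (hunit : ∀ f : A, (∀ x : X, (f : X → K) x ≠ 0) → IsUnit f)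
    {I : Ideal A} {h g : A} (hI : h ∈ I)
    (hZ : {x | (h : X → K) x = 0} ⊆ {x | (g : X → K) x = 0}) : g ∈ I.jacobson := by
  rw [Ideal.mem_jacobson_iff]
  intro y
  obtain ⟨a, b, hab⟩ := exists_zeroSet_mul_add_mul_eq_inter huv hu hv h (1 + y * g)
  have hk_ne : ∀ x, ((h * a + (1 + y * g) * b : A) : X → K) x ≠ 0 := by
    intro x hzero
    obtain ⟨hx, hw⟩ : x ∈ {x | (h : X → K) x = 0} ∩ {x | ((1 + y * g : A) : X → K) x = 0} :=
      hab ▸ hzero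
    simp [show (g : X → K) x = 0 from hZ hx] at hw
  obtain ⟨k, hk⟩ := hunit _ hk_ne
  refine ⟨↑k⁻¹ * b, ?_⟩
  have hkk : (↑k⁻¹ : A) * (h * a + (1 + y * g) * b) = 1 := by rw [← hk, Units.inv_mul]
  have hcomb : ↑k⁻¹ * b * y * g + ↑k⁻¹ * b - 1 = -(↑k⁻¹ * a * h) := by
    linear_combination hkk
  rw [hcomb]
  exact neg_mem (Ideal.mul_mem_left _ _ hI)

end ZeroSets

theorem stmt_10_general {K : Type*} [Field K] (u v : K × K → K)
    (huv : ∀ a b : K, a * u (a, b) + b * v (a, b) = 0 ↔ a = 0 ∧ b = 0)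
    {X : Type*} (A : Subring (X → K))
    (hu : ∀ f g : A, (fun x : X => u ((f : X → K) x, (g : X → K) x)) ∈ A)
    (hv : ∀ f g : A, (fun x : X => v ((f : X → K) x, (g : X → K) x)) ∈ A)
    (hunit : ∀ f : A, (∀ x : X, (f : X → K) x ≠ 0) → IsUnit f)
    (n : ℕ) (f : Fin n → A) (g : A)
    (hsub : (⋂ i, {x : X | (f i : X → K) x = 0}) ⊆ {x : X | (g : X → K) x = 0}) :
    g ∈ (Ideal.span (Set.range f)).jacobson := by
  obtain ⟨h, hmem, hZ⟩ := exists_mem_span_zeroSet_eq_iInter huv hu hv f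
  exact mem_jacobson_of_zeroSet_subset huv hu hv hunit hmem (hZ ▸ hsub)

theorem stmt_10 {K : Type*} [Field K] (u v : K × K → K)
    (huv : ∀ a b : K, a * u (a, b) + b * v (a, b) = 0 ↔ a = 0 ∧ b = 0)
    {X : Type*} [Nonempty X] (A : Subring (X → K))
    (hu : ∀ f g : A, (fun x : X => u ((f : X → K) x, (g : X → K) x)) ∈ A)
    (hv : ∀ f g : A, (fun x : X => v ((f : X → K) x, (g : X → K) x)) ∈ A)
    (hunit : ∀ f : A, (∀ x : X, (f : X → K) x ≠ 0) → IsUnit f)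
    (n : ℕ) (f : Fin n → A) (g : A)
    (hsub : (⋂ i, {x : X | (f i : X → K) x = 0}) ⊆ {x : X | (g : X → K) x = 0}) :
    g ∈ (Ideal.span (Set.range f)).jacobson :=
  stmt_10_general u v huv A hu hv hunit n f g hsub
end

section
/- Let K be a field equipped with a valuation v : K → Γ₀ into a linearly ordered commutative group with zero, and give K the valuation topology (and K^m the product topology). Then for every m ≥ 0 there exists a continuous function ν : K^m → K such that for every x = (x₁, …, x_m) ∈ K^m, v(ν(x)) = max(v(x₁), …, v(x_m)) (the maximum over the empty index set being 0, the least element of Γ₀). -/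
/-- In a linearly ordered commutative monoid with zero, `0` is the least element. -/
local instance instOrderBotOfLinearOrderedCommMonoidWithZero
    {Γ₀ : Type*} [LinearOrderedCommMonoidWithZero Γ₀] : OrderBot Γ₀ where
  bot := 0
  bot_le _ := zero_le'

/-!
The valuation topology makes `v` locally constant off `0` and makes every ball
`{y | v y < γ}`, `γ ≠ 0`, a neighbourhood of `0`. Hence the comparison `v b ≤ v a` is locally
constant away from `(0, 0)`, so that `(a, b) ↦ (if v b ≤ v a then a else b)` is locally a
projection there, and it is continuous at `(0, 0)` because both projections are. This is a
continuous binary choice of an element of maximal valuation; iterating it over the coordinates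
gives `ν`.
-/

open Filter Topology

namespace Valued

section Ring

variable {R : Type*} [Ring R] {Γ₀ : Type*} [LinearOrderedCommGroupWithZero Γ₀] [Valued R Γ₀]

theorem isOpen_setOf_valuation_lt_s12 (x : R) : IsOpen {y : R | v y < v x} := by
  simpa only [Valuation.restrict_lt_iff] using isOpen_ball R (v.restrict x)

theorem isOpen_setOf_valuation_le {x : R} (hx : v x ≠ 0) : IsOpen {y : R | v y ≤ v x} := by
  simpa only [Valuation.restrict_le_iff] using
    isOpen_closedBall R (r := v.restrict x) (by rwa [Ne, Valuation.restrict_eq_zero_iff])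

theorem eventually_valuation_le_iff {a b : R} (hab : v a ≠ 0 ∨ v b ≠ 0) :
    ∀ᶠ p : R × R in 𝓝 (a, b), (v p.2 ≤ v p.1 ↔ v b ≤ v a) := by
  rw [nhds_prod_eq]
  rcases le_or_gt (v b) (v a) with hle | hlt
  · have ha : v a ≠ 0 := hab.elim id fun hb ha => hb (le_antisymm (ha ▸ hle) zero_le)
    filter_upwards [prod_mem_prod (locally_const ha)
        ((isOpen_setOf_valuation_le ha).mem_nhds hle)] with p ⟨hp₁, hp₂⟩
    exact iff_of_true (hp₁.symm ▸ hp₂) hle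
  · filter_upwards [prod_mem_prod ((isOpen_setOf_valuation_lt_s12 b).mem_nhds hlt)
        (locally_const (ne_bot_of_gt hlt))] with p ⟨hp₁, hp₂⟩
    exact iff_of_false (by rw [not_le, hp₂]; exact hp₁) hlt.not_ge

end Ring

section DivisionRing

variable {K : Type*} [DivisionRing K] {Γ₀ : Type*} [LinearOrderedCommGroupWithZero Γ₀]
  [Valued K Γ₀]

noncomputable def selectMax (a b : K) : K :=
  if v b ≤ v a then a else b

theorem v_selectMax (a b : K) : v (selectMax a b) = max (v a) (v b) := by
  unfold selectMax
  split_ifs with h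
  · exact (max_eq_left h).symm
  · exact (max_eq_right (not_le.mp h).le).symm

theorem continuous_selectMax : Continuous fun p : K × K => selectMax p.1 p.2 := by
  rw [continuous_iff_continuousAt]
  rintro ⟨a, b⟩
  by_cases h0 : a = 0 ∧ b = 0
  · obtain ⟨rfl, rfl⟩ := h0
    rw [ContinuousAt, show selectMax (0 : K) 0 = 0 from if_pos le_rfl]
    exact Tendsto.if' (p := fun p : K × K => v p.2 ≤ v p.1) (continuous_fst.tendsto (0, 0))
      (continuous_snd.tendsto (0, 0))
  · have hab : v a ≠ 0 ∨ v b ≠ 0 := by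
      simpa only [ne_eq, Valuation.zero_iff, not_and_or] using h0
    have hloc : (fun p : K × K => selectMax p.1 p.2) =ᶠ[𝓝 (a, b)]
        fun p => if v b ≤ v a then p.1 else p.2 := by
      filter_upwards [eventually_valuation_le_iff hab] with p hp
      simp only [selectMax, hp]
    refine ContinuousAt.congr ?_ hloc.symm
    split_ifs
    exacts [continuousAt_fst, continuousAt_snd]

theorem exists_continuous_valuation_eq_finset_sup {ι : Type*} (s : Finset ι) :
    ∃ ν : (ι → K) → K, Continuous ν ∧ ∀ x : ι → K, v (ν x) = s.sup fun i => v (x i) := by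
  classical
  induction s using Finset.induction_on with
  | empty => exact ⟨fun _ => 0, continuous_const, fun _ => by simp; rfl⟩
  | insert i s _ ih =>
    obtain ⟨ν, hν, hνv⟩ := ih
    refine ⟨fun x => selectMax (x i) (ν x),
      continuous_selectMax.comp ((continuous_apply i).prodMk hν), fun x => ?_⟩
    rw [Finset.sup_insert, v_selectMax, hνv]

end DivisionRing

end Valued

theorem stmt_12 {K : Type*} [Field K] {Γ₀ : Type*}
    [LinearOrderedCommGroupWithZero Γ₀] [Valued K Γ₀] (m : ℕ) :
    ∃ ν : (Fin m → K) → K, Continuous ν ∧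
      ∀ x : Fin m → K,
        Valued.v (ν x) = (Finset.univ : Finset (Fin m)).sup (fun i => Valued.v (x i)) :=
  Valued.exists_continuous_valuation_eq_finset_sup Finset.univ
end

section
/- Let K be a topological field whose topology is T1, let X be a topological space, and let A be a set of continuous functions X → K such that for every open set U ⊆ X and every x ∈ U there is h ∈ A with h(x) ≠ 0 and h = 0 on X ∖ U. Let p ∈ A have a unique zero p₀ ∈ X and let s ∈ A satisfy s(p₀) = 0. Then p₀ is an isolated point of Z(s) if and only if there exists u ∈ A such that Z(s) ⊆ {p₀} ∪ Z(u) and Z(s) ⊄ Z(u). -/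
/-!
If `U ∩ Z(s) = {p₀}`, a bump function `h` at `p₀` supported in `U` works as `u`: off `U` it
vanishes, and inside `U` the only zero of `s` is `p₀`. Conversely, if `Z(s) ⊆ {p₀} ∪ Z(u)` but
`Z(s) ⊄ Z(u)`, then `u p₀ ≠ 0`, and the support of `u`, open because `u` is continuous and `K`
is T1, meets `Z(s)` exactly in `p₀`.
-/

section ZeroSet

variable {X K : Type*} [Zero K] {S U : Set X} {x₀ : X} {u : X → K}

lemma apply_ne_zero_of_subset_insert_of_not_subset (hsub : S ⊆ insert x₀ {x | u x = 0})
    (hnsub : ¬ S ⊆ {x | u x = 0}) : u x₀ ≠ 0 := by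
  obtain ⟨x, hxS, hux⟩ := Set.not_subset.mp hnsub
  rcases hsub hxS with rfl | hux'
  · exact hux
  · exact absurd hux' hux

lemma support_inter_eq_singleton_of_subset_insert (hx₀ : x₀ ∈ S) (hsub : S ⊆ insert x₀ {x | u x = 0})
    (hnsub : ¬ S ⊆ {x | u x = 0}) : Function.support u ∩ S = {x₀} := by
  refine Set.Subset.antisymm (fun x ⟨hux, hxS⟩ => ?_) ?_
  · exact (hsub hxS).resolve_right hux
  · rintro x rfl
    exact ⟨apply_ne_zero_of_subset_insert_of_not_subset hsub hnsub, hx₀⟩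

lemma subset_insert_zeroSet_of_inter_eq_singleton (hUS : U ∩ S = {x₀})
    (hu : ∀ y ∉ U, u y = 0) : S ⊆ insert x₀ {x | u x = 0} := by
  intro x hxS
  by_cases hxU : x ∈ U
  · exact Or.inl (hUS.subset ⟨hxU, hxS⟩)
  · exact Or.inr (hu x hxU)

end ZeroSet

theorem stmt_14_general {K : Type*} [Field K] [TopologicalSpace K]
    [T1Space K] {X : Type*} [TopologicalSpace X] (A : Set (X → K))
    (hcont : ∀ f ∈ A, Continuous f)
    (hbump : ∀ U : Set X, IsOpen U → ∀ x ∈ U,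
      ∃ h ∈ A, h x ≠ 0 ∧ ∀ y ∉ U, h y = 0)
    (p₀ : X)
    (s : X → K) (hsp₀ : s p₀ = 0) :
    (∃ U : Set X, IsOpen U ∧ U ∩ {x | s x = 0} = {p₀})
      ↔ ∃ u ∈ A, {x | s x = 0} ⊆ insert p₀ {x | u x = 0}
          ∧ ¬ {x | s x = 0} ⊆ {x | u x = 0} := by
  constructor
  · rintro ⟨U, hU, hUs⟩
    have hp₀U : p₀ ∈ U := (hUs.symm.subset rfl).1
    obtain ⟨h, hA, hhp₀, hh⟩ := hbump U hU p₀ hp₀U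
    exact ⟨h, hA, subset_insert_zeroSet_of_inter_eq_singleton hUs hh,
      fun hsub => hhp₀ (hsub hsp₀)⟩
  · rintro ⟨u, hu, hsub, hnsub⟩
    exact ⟨Function.support u, (hcont u hu).isOpen_support,
      support_inter_eq_singleton_of_subset_insert hsp₀ hsub hnsub⟩

theorem stmt_14 {K : Type*} [Field K] [TopologicalSpace K] [IsTopologicalDivisionRing K]
    [T1Space K] {X : Type*} [TopologicalSpace X] (A : Set (X → K))
    (hcont : ∀ f ∈ A, Continuous f)
    (hbump : ∀ U : Set X, IsOpen U → ∀ x ∈ U,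
      ∃ h ∈ A, h x ≠ 0 ∧ ∀ y ∉ U, h y = 0)
    (p : X → K) (hp : p ∈ A) (p₀ : X) (hpzero : ∀ x, p x = 0 ↔ x = p₀)
    (s : X → K) (hs : s ∈ A) (hsp₀ : s p₀ = 0) :
    (∃ U : Set X, IsOpen U ∧ U ∩ {x | s x = 0} = {p₀})
      ↔ ∃ u ∈ A, {x | s x = 0} ⊆ insert p₀ {x | u x = 0}
          ∧ ¬ {x | s x = 0} ⊆ {x | u x = 0} :=
  stmt_14_general A hcont hbump p₀ s hsp₀
end

section
/- Let (G,+,≤) be an abelian group equipped with a total preorder ≤ compatible with addition (x ≤ y implies x + z ≤ y + z for all z), and let τ ∈ G with 0 < τ. If T ⊆ G is a finite τℤ-chunk of G, then there exists n ∈ ℕ such that T = {k·τ : k ∈ ℤ, −n ≤ k ≤ n}. -/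
/-! A nonnegative `u ∈ T` lies in some `[k • τ, (k + 1) • τ)` with `k • τ ∈ T`; since `u` itself
lies in `[u, u + τ)`, the uniqueness clause of the chunk axioms forces `u = k • τ`. Finiteness of
`T` provides an `n` with `n • τ ∈ T` but `(n + 1) • τ ∉ T`. Closure under sums bounded by `n • τ`
puts every `k • τ` with `|k| ≤ n` into `T`, and no multiple beyond `n • τ` can be in `T`, since
`(n + 1) • τ` would then be bounded by an element of `T`. -/

/-- `T` is a `τℤ`-chunk of `G` with respect to the total preorder `le`. -/
def IsChunk {G : Type*} [AddCommGroup G] (le : G → G → Prop) (τ : G) (T : Set G) : Prop :=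
  τ ∈ T ∧
  (∀ α ∈ T, -α ∈ T) ∧
  (∀ α ∈ T, ∀ β ∈ T, ∀ γ ∈ T, le (-γ) (α + β) → le (α + β) γ → α + β ∈ T) ∧
  (∀ γ ∈ T, ∀ u : G, le (-γ) u → le u γ →
    ∃! ξ : G, ξ ∈ T ∧ le ξ u ∧ le u (ξ + τ) ∧ ¬ le (ξ + τ) u)

theorem lt_of_not_ge_of_total {α : Type*} [Preorder α] [@Std.Total α (· ≤ ·)] {a b : α}
    (h : ¬ a ≤ b) : b < a :=
  lt_of_le_not_ge ((total_of (· ≤ ·) a b).resolve_left h) h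

theorem exists_nsmul_le_lt_succ_nsmul {M : Type*} [AddMonoid M] [Preorder M]
    [@Std.Total M (· ≤ ·)] {τ u : M} (hu : 0 ≤ u) :
    ∀ n : ℕ, u < (n + 1) • τ → ∃ k ≤ n, k • τ ≤ u ∧ u < (k + 1) • τ
  | 0, h => ⟨0, le_rfl, by rwa [zero_nsmul], h⟩
  | n + 1, h => by
    by_cases hle : (n + 1) • τ ≤ u
    · exact ⟨n + 1, le_rfl, hle, h⟩
    · obtain ⟨k, hk, hk'⟩ := exists_nsmul_le_lt_succ_nsmul hu n (lt_of_not_ge_of_total hle)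
      exact ⟨k, hk.trans n.le_succ, hk'⟩

section PreorderedGroup

variable {G : Type*} [AddCommGroup G] [Preorder G] [AddLeftMono G]

theorem addLeftStrictMono_of_addLeftMono : AddLeftStrictMono G :=
  ⟨fun c _ _ h => by simpa only [lt_iff_le_not_ge, add_le_add_iff_left] using h⟩

theorem exists_nsmul_mem_and_succ_nsmul_notMem {τ : G} {T : Set G} (hτ : 0 < τ) (hfin : T.Finite)
    (h0 : (0 : G) ∈ T) : ∃ n : ℕ, n • τ ∈ T ∧ (n + 1) • τ ∉ T := by
  have : AddLeftStrictMono G := addLeftStrictMono_of_addLeftMono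
  by_contra! hall
  have hmem : ∀ n : ℕ, n • τ ∈ T := fun n => n.rec (by simpa using h0) fun n hn => hall n hn
  exact Set.infinite_range_of_injective (nsmul_left_strictMono hτ).injective
    (hfin.subset (Set.range_subset_iff.2 hmem))

end PreorderedGroup

namespace IsChunk

variable {G : Type*} [AddCommGroup G] [Preorder G] {τ : G} {T : Set G}

theorem self_mem (hT : IsChunk (· ≤ ·) τ T) : τ ∈ T :=
  hT.1

theorem neg_mem (hT : IsChunk (· ≤ ·) τ T) {u : G} (hu : u ∈ T) : -u ∈ T :=
  hT.2.1 u hu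

theorem add_mem (hT : IsChunk (· ≤ ·) τ T) {α β γ : G} (hα : α ∈ T) (hβ : β ∈ T) (hγ : γ ∈ T)
    (h₁ : -γ ≤ α + β) (h₂ : α + β ≤ γ) : α + β ∈ T :=
  hT.2.2.1 α hα β hβ γ hγ h₁ h₂

variable [AddLeftMono G]

theorem zero_mem (hT : IsChunk (· ≤ ·) τ T) (hτ : 0 ≤ τ) : (0 : G) ∈ T := by
  have h := hT.add_mem hT.self_mem (hT.neg_mem hT.self_mem) hT.self_mem
  rw [add_neg_cancel] at h
  exact h (Left.neg_nonpos_iff.2 hτ) hτ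

theorem nsmul_mem_of_le (hT : IsChunk (· ≤ ·) τ T) (hτ : 0 ≤ τ) {n : ℕ} (hn : n • τ ∈ T) :
    ∀ k ≤ n, k • τ ∈ T
  | 0, _ => by simpa using hT.zero_mem hτ
  | k + 1, hk => by
    have hle : (k + 1) • τ ≤ n • τ := nsmul_le_nsmul_left hτ hk
    have hge : -(n • τ) ≤ (k + 1) • τ :=
      (Left.neg_nonpos_iff.2 (nsmul_nonneg hτ n)).trans (nsmul_nonneg hτ _)
    rw [succ_nsmul] at hle hge ⊢
    exact hT.add_mem (hT.nsmul_mem_of_le hτ hn k (by omega)) hT.self_mem hn hge hle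

variable [@Std.Total G (· ≤ ·)]

theorem eq_of_le_of_lt_add (hT : IsChunk (· ≤ ·) τ T) (hτ : 0 < τ) {u ξ : G} (hu : u ∈ T)
    (hξ : ξ ∈ T) (h₁ : ξ ≤ u) (h₂ : u < ξ + τ) : ξ = u := by
  have : AddLeftStrictMono G := addLeftStrictMono_of_addLeftMono
  obtain ⟨γ, hγ, hγu, huγ⟩ : ∃ γ ∈ T, -γ ≤ u ∧ u ≤ γ := by
    rcases total_of (· ≤ ·) 0 u with h | h
    · exact ⟨u, hu, (Left.neg_nonpos_iff.2 h).trans h, le_rfl⟩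
    · exact ⟨-u, hT.neg_mem hu, by rw [neg_neg], h.trans (Left.nonneg_neg_iff.2 h)⟩
  obtain ⟨_, _, huniq⟩ := hT.2.2.2 γ hγ u hγu huγ
  have hself : u < u + τ := lt_add_of_pos_right u hτ
  exact (huniq ξ ⟨hξ, h₁, lt_iff_le_not_ge.1 h₂⟩).trans
    (huniq u ⟨hu, le_rfl, lt_iff_le_not_ge.1 hself⟩).symm

theorem eq_nsmul_of_nonneg (hT : IsChunk (· ≤ ·) τ T) (hτ : 0 < τ) {n : ℕ} (hn : n • τ ∈ T)
    (hn' : (n + 1) • τ ∉ T) {u : G} (hu : u ∈ T) (h0u : 0 ≤ u) : ∃ k ≤ n, u = k • τ := by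
  have hlt : u < (n + 1) • τ := by
    refine lt_of_not_ge_of_total fun hle => hn' ?_
    have hge : -u ≤ (n + 1) • τ := (Left.neg_nonpos_iff.2 h0u).trans (nsmul_nonneg hτ.le _)
    rw [succ_nsmul] at hle hge ⊢
    exact hT.add_mem hn hT.self_mem hu hge hle
  obtain ⟨k, hkn, hku, huk⟩ := exists_nsmul_le_lt_succ_nsmul h0u n hlt
  rw [succ_nsmul] at huk
  exact ⟨k, hkn, (hT.eq_of_le_of_lt_add hτ hu (hT.nsmul_mem_of_le hτ.le hn k hkn) hku huk).symm⟩

theorem eq_setOf_zsmul (hT : IsChunk (· ≤ ·) τ T) (hτ : 0 < τ) {n : ℕ} (hn : n • τ ∈ T)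
    (hn' : (n + 1) • τ ∉ T) :
    T = {g : G | ∃ k : ℤ, -(n : ℤ) ≤ k ∧ k ≤ (n : ℤ) ∧ g = k • τ} := by
  ext u
  constructor
  · intro hu
    rcases total_of (· ≤ ·) 0 u with h | h
    · obtain ⟨k, hk, rfl⟩ := hT.eq_nsmul_of_nonneg hτ hn hn' hu h
      exact ⟨k, by omega, by omega, (natCast_zsmul τ k).symm⟩
    · obtain ⟨k, hk, hku⟩ :=
        hT.eq_nsmul_of_nonneg hτ hn hn' (hT.neg_mem hu) (Left.nonneg_neg_iff.2 h)
      refine ⟨-k, by omega, by omega, ?_⟩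
      rw [neg_zsmul, natCast_zsmul, ← hku, neg_neg]
  · rintro ⟨k, hk₁, hk₂, rfl⟩
    obtain ⟨m, rfl | rfl⟩ := Int.eq_nat_or_neg k
    · rw [natCast_zsmul]
      exact hT.nsmul_mem_of_le hτ.le hn m (by omega)
    · rw [neg_zsmul, natCast_zsmul]
      exact hT.neg_mem (hT.nsmul_mem_of_le hτ.le hn m (by omega))

end IsChunk

theorem stmt_15 {G : Type*} [AddCommGroup G] (le : G → G → Prop)
    (htotal : ∀ a b : G, le a b ∨ le b a)
    (htrans : ∀ a b c : G, le a b → le b c → le a c)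
    (hadd : ∀ a b z : G, le a b → le (a + z) (b + z))
    (τ : G) (hτ : le 0 τ ∧ ¬ le τ 0)
    (T : Set G) (hfin : T.Finite) (hchunk : IsChunk le τ T) :
    ∃ n : ℕ, T = {g : G | ∃ k : ℤ, -(n : ℤ) ≤ k ∧ k ≤ (n : ℤ) ∧ g = k • τ} := by
  let _ : Preorder G :=
    { le := le, le_refl := fun a => (htotal a a).elim id id, le_trans := htrans }
  have : AddLeftMono G := ⟨fun z a b h => by rw [add_comm z, add_comm z]; exact hadd a b z h⟩
  have : @Std.Total G (· ≤ ·) := ⟨htotal⟩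
  have hτ' : (0 : G) < τ := lt_iff_le_not_ge.2 hτ
  obtain ⟨n, hn, hn'⟩ :=
    exists_nsmul_mem_and_succ_nsmul_notMem hτ' hfin (hchunk.zero_mem hτ'.le)
  exact ⟨n, hchunk.eq_setOf_zsmul hτ' hn hn'⟩
end

section
/- Let K be a normed field, X a topological space, p₀ ∈ X, and p : X → K a continuous function whose zero set is exactly {p₀}. Let S₁, …, S_k be pairwise disjoint subsets of X ∖ {p₀}, each with p₀ in its closure, and let δ₁, …, δ_k : X ∖ {p₀} → K be continuous bounded functions such that for each i, δᵢ = 1 on Sᵢ and δᵢ = 0 on S_j for every j ≠ i. Let l₁, …, l_k ∈ K and define f : X → K by f(x) = (l₁δ₁(x) + … + l_kδ_k(x))·p(x) for x ≠ p₀ and f(p₀) = 0. Then: (i) f is continuous on X; (ii) f(x) = lᵢ·p(x) for every x ∈ Sᵢ; and (iii) with S = S₁ ∪ … ∪ S_k, the set {l ∈ K : (p₀, l) lies in the closure in X × K of the graph {(x, f(x)/p(x)) : x ∈ S}} is exactly {l₁, …, l_k}. -/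
/-!
Away from `p₀` the function `f` is the continuous function `(∑ i, l i * δ i) * p`, and the
boundedness of the `δ i` gives `‖f‖ ≤ C ‖p‖`, which forces continuity at the zero `p₀` of `p`.
On `S i` the quotient `f / p` is the constant `l i`, so the graph in (iii) is the finite union of
the boxes `S i ×ˢ {l i}`, whose closure meets the fibre over `p₀` exactly in the points `l i`.
-/

open Filter Topology

section Continuity

variable {X E : Type*} [TopologicalSpace X]

theorem continuousAt_of_norm_le_mul_norm {F : Type*} [NormedAddGroup E] [SeminormedAddGroup F]
    {f : X → E} {g : X → F} {a : X} {C : ℝ} (hg : ContinuousAt g a) (hga : g a = 0)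
    (hfg : ∀ x, ‖f x‖ ≤ C * ‖g x‖) : ContinuousAt f a := by
  have hfa : f a = 0 := norm_le_zero_iff.mp (by simpa [hga] using hfg a)
  have hlim : Tendsto (fun x => C * ‖g x‖) (𝓝 a) (𝓝 0) := by
    simpa [ContinuousAt, hga] using hg.norm.const_mul C
  rw [ContinuousAt, hfa]
  exact squeeze_zero_norm hfg hlim

theorem continuous_of_continuousOn_compl_singleton {f : X → E} [TopologicalSpace E] {a : X}
    (ha : IsClosed ({a} : Set X)) (hf : ContinuousOn f {a}ᶜ) (hfa : ContinuousAt f a) :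
    Continuous f := by
  refine continuous_iff_continuousAt.mpr fun x => ?_
  rcases eq_or_ne x a with rfl | hx
  · exact hfa
  · exact hf.continuousAt (ha.isOpen_compl.mem_nhds hx)

end Continuity

theorem exists_norm_sum_mul_le {ι X K : Type*} [Fintype ι] [SeminormedRing K]
    {s : Set X} (l : ι → K) (δ : ι → X → K) (hδ : ∀ i, ∃ M : ℝ, ∀ x ∈ s, ‖δ i x‖ ≤ M) :
    ∃ C : ℝ, ∀ x ∈ s, ‖∑ i, l i * δ i x‖ ≤ C := by
  choose M hM using hδ
  refine ⟨∑ i, ‖l i‖ * M i, fun x hx => ?_⟩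
  calc ‖∑ i, l i * δ i x‖ ≤ ∑ i, ‖l i‖ * ‖δ i x‖ := norm_sum_le_of_le _ fun i _ => norm_mul_le _ _
    _ ≤ ∑ i, ‖l i‖ * M i := by gcongr with i; exact hM i x hx

theorem sum_mul_eq_of_mem {ι X R : Type*} [Fintype ι] [DecidableEq ι] [Semiring R]
    {S : ι → Set X} {δ : ι → X → R} (l : ι → R)
    (hδ1 : ∀ i, ∀ x ∈ S i, δ i x = 1) (hδ0 : ∀ i j, i ≠ j → ∀ x ∈ S j, δ i x = 0)
    {i : ι} {x : X} (hx : x ∈ S i) : ∑ j, l j * δ j x = l i := by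
  rw [Fintype.sum_eq_single i fun j hj => by rw [hδ0 j i hj x hx, mul_zero], hδ1 i x hx, mul_one]

section Graph

variable {ι X Y : Type*}

theorem image_graph_iUnion_eq_iUnion_prod_singleton {S : ι → Set X} {g : X → Y} {c : ι → Y}
    (hg : ∀ i, ∀ x ∈ S i, g x = c i) :
    (fun x => (x, g x)) '' (⋃ i, S i) = ⋃ i, S i ×ˢ {c i} := by
  rw [Set.image_iUnion]
  refine Set.iUnion_congr fun i => ?_
  ext ⟨x, y⟩
  simp only [Set.mem_image, Set.mem_prod, Set.mem_singleton_iff, Prod.mk.injEq]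
  constructor
  · rintro ⟨x, hx, rfl, rfl⟩
    exact ⟨hx, hg i x hx⟩
  · rintro ⟨hx, rfl⟩
    exact ⟨x, hx, rfl, hg i x hx⟩

theorem mem_closure_iUnion_prod_singleton_iff [Finite ι] [TopologicalSpace X]
    [TopologicalSpace Y] [T1Space Y] {S : ι → Set X} {c : ι → Y} {a : X} {y : Y} :
    (a, y) ∈ closure (⋃ i, S i ×ˢ {c i}) ↔ ∃ i, a ∈ closure (S i) ∧ c i = y := by
  simp only [closure_iUnion_of_finite, closure_prod_eq, closure_singleton, Set.mem_iUnion,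
    Set.mem_prod, Set.mem_singleton_iff, eq_comm]

end Graph

open Classical in

theorem stmt_16_general {K : Type*} [NormedField K] {X : Type*} [TopologicalSpace X]
    (p₀ : X) (p : X → K) (hp_cont : Continuous p) (hp : ∀ x, p x = 0 ↔ x = p₀)
    (k : ℕ) (S : Fin k → Set X)
    (hSsub : ∀ i, p₀ ∉ S i)
    (hScl : ∀ i, p₀ ∈ closure (S i))
    (δ : Fin k → X → K)
    (hδcont : ∀ i, ContinuousOn (δ i) {p₀}ᶜ)
    (hδbd : ∀ i, ∃ M : ℝ, ∀ x : X, x ≠ p₀ → ‖δ i x‖ ≤ M)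
    (hδ1 : ∀ i, ∀ x ∈ S i, δ i x = 1)
    (hδ0 : ∀ i j, i ≠ j → ∀ x ∈ S j, δ i x = 0)
    (l : Fin k → K) (f : X → K)
    (hf : ∀ x : X, f x = if x = p₀ then 0 else (∑ i, l i * δ i x) * p x) :
    Continuous f ∧
      (∀ i, ∀ x ∈ S i, f x = l i * p x) ∧
      {l' : K | (p₀, l') ∈ closure ((fun x => (x, f x / p x)) '' (⋃ i, S i))}
        = Set.range l := by
  have hf_off : Set.EqOn f (fun x => (∑ i, l i * δ i x) * p x) {p₀}ᶜ := fun x hx => by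
    rw [hf x, if_neg (Set.mem_compl_singleton_iff.mp hx)]
  have hp₀ : p p₀ = 0 := (hp p₀).mpr rfl
  have hfS : ∀ i, ∀ x ∈ S i, f x = l i * p x := fun i x hx => by
    rw [hf_off (x := x) fun h => hSsub i (h ▸ hx)]
    exact congrArg (· * p x) (sum_mul_eq_of_mem l hδ1 hδ0 hx)
  refine ⟨?_, hfS, ?_⟩
  · obtain ⟨C, hC⟩ := exists_norm_sum_mul_le l δ hδbd
    have hbound : ∀ x, ‖f x‖ ≤ C * ‖p x‖ := fun x => by
      rcases eq_or_ne x p₀ with rfl | hx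
      · simp [hf, hp₀]
      · rw [hf_off hx, norm_mul]
        exact mul_le_mul_of_nonneg_right (hC x hx) (norm_nonneg _)
    have hclosed : IsClosed ({p₀} : Set X) := by
      have h : p ⁻¹' {0} = {p₀} := Set.ext fun x => hp x
      exact h ▸ isClosed_singleton.preimage hp_cont
    refine continuous_of_continuousOn_compl_singleton hclosed ?_
      (continuousAt_of_norm_le_mul_norm hp_cont.continuousAt hp₀ hbound)
    refine ContinuousOn.congr ?_ hf_off
    exact (continuousOn_finsetSum _ fun i _ => continuousOn_const.mul (hδcont i)).mul
      hp_cont.continuousOn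
  · have hquot : ∀ i, ∀ x ∈ S i, f x / p x = l i := fun i x hx => by
      have hpx : p x ≠ 0 := fun h => hSsub i ((hp x).mp h ▸ hx)
      rw [hfS i x hx, mul_div_cancel_right₀ _ hpx]
    ext l'
    rw [Set.mem_ofPred_eq, image_graph_iUnion_eq_iUnion_prod_singleton hquot,
      mem_closure_iUnion_prod_singleton_iff]
    exact exists_congr fun i => and_iff_right (hScl i)

open Classical in
theorem stmt_16 {K : Type*} [NormedField K] {X : Type*} [TopologicalSpace X]
    (p₀ : X) (p : X → K) (hp_cont : Continuous p) (hp : ∀ x, p x = 0 ↔ x = p₀)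
    (k : ℕ) (S : Fin k → Set X)
    (hdisj : ∀ i j, i ≠ j → Disjoint (S i) (S j))
    (hSsub : ∀ i, p₀ ∉ S i)
    (hScl : ∀ i, p₀ ∈ closure (S i))
    (δ : Fin k → X → K)
    (hδcont : ∀ i, ContinuousOn (δ i) {p₀}ᶜ)
    (hδbd : ∀ i, ∃ M : ℝ, ∀ x : X, x ≠ p₀ → ‖δ i x‖ ≤ M)
    (hδ1 : ∀ i, ∀ x ∈ S i, δ i x = 1)
    (hδ0 : ∀ i j, i ≠ j → ∀ x ∈ S j, δ i x = 0)
    (l : Fin k → K) (f : X → K)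
    (hf : ∀ x : X, f x = if x = p₀ then 0 else (∑ i, l i * δ i x) * p x) :
    Continuous f ∧
      (∀ i, ∀ x ∈ S i, f x = l i * p x) ∧
      {l' : K | (p₀, l') ∈ closure ((fun x => (x, f x / p x)) '' (⋃ i, S i))}
        = Set.range l :=
  stmt_16_general p₀ p hp_cont hp k S hSsub hScl δ hδcont hδbd hδ1 hδ0 l f hf
end

section
/- Let r ≥ 2 and k ≥ 1 be integers, let U ⊆ ℝ^r be open and let p₀ ∈ U. Then there exist continuous functions s₁, …, s_k : U → ℝ and continuous bounded functions δ₁, …, δ_k : U ∖ {p₀} → ℝ such that, setting Sᵢ = {x ∈ U : sᵢ(x) = 0} ∖ {p₀}: (1) the sets S₁, …, S_k are pairwise disjoint; (2) for each i, sᵢ(p₀) = 0 and p₀ lies in the closure of Sᵢ (i.e. p₀ is a non-isolated zero of sᵢ); (3) for each i, δᵢ = 1 on Sᵢ and δᵢ = 0 on S_j for every j ≠ i. -/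
/-!
With `ρ = dist · p₀`, the function `sᵢ = ρ · sin (π (ρ⁻¹ - i) / k)` is continuous (at `p₀` it is
squeezed by `ρ`), and off `p₀` it vanishes exactly where `ρ⁻¹ ∈ i + kℤ`. For distinct `i < k` these
residue classes are disjoint, and each contains arbitrarily large integers, so every zero set
accumulates at `p₀`. Once the zero sets are pairwise disjoint on `U ∖ {p₀}`, the products
`δᵢ = ∏_{j ≠ i} |sⱼ| / (|sᵢ| + |sⱼ|)` have nonvanishing denominators there, so they are continuous,
take values in `[0, 1]`, equal `1` on `Sᵢ` and vanish on every `Sⱼ`, `j ≠ i`.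
-/

open Real Filter Topology

section Separation

variable {X ι : Type*} [Fintype ι] [DecidableEq ι]

noncomputable def separatingFun (s : ι → X → ℝ) (i : ι) (x : X) : ℝ :=
  ∏ j ∈ Finset.univ.erase i, |s j x| / (|s i x| + |s j x|)

theorem abs_separatingFun_le_one (s : ι → X → ℝ) (i : ι) (x : X) :
    |separatingFun s i x| ≤ 1 := by
  have hfactor : ∀ j ∈ Finset.univ.erase i, 0 ≤ |s j x| / (|s i x| + |s j x|) :=
    fun j _ => by positivity
  rw [separatingFun, abs_of_nonneg (Finset.prod_nonneg hfactor)]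
  exact Finset.prod_le_one hfactor fun j _ =>
    div_le_one_of_le₀ (le_add_of_nonneg_left (abs_nonneg _)) (by positivity)

theorem separatingFun_eq_zero {s : ι → X → ℝ} {i j : ι} (hji : j ≠ i) {x : X}
    (hj : s j x = 0) : separatingFun s i x = 0 :=
  Finset.prod_eq_zero (Finset.mem_erase.2 ⟨hji, Finset.mem_univ j⟩) (by simp [hj])

variable {s : ι → X → ℝ} {V : Set X}

theorem separatingFun_eq_one (hdisj : Pairwise fun i j => ∀ x ∈ V, s i x = 0 → s j x ≠ 0)
    {i : ι} {x : X} (hx : x ∈ V) (hi : s i x = 0) :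
    separatingFun s i x = 1 := by
  refine Finset.prod_eq_one fun j hj => ?_
  have hsj : s j x ≠ 0 := hdisj (Finset.ne_of_mem_erase hj).symm x hx hi
  rw [hi, abs_zero, zero_add, div_self (abs_ne_zero.2 hsj)]

theorem continuousOn_separatingFun [TopologicalSpace X]
    (hdisj : Pairwise fun i j => ∀ x ∈ V, s i x = 0 → s j x ≠ 0) (hs : ∀ j, ContinuousOn (s j) V)
    (i : ι) : ContinuousOn (separatingFun s i) V := by
  refine continuousOn_finsetProd _ fun j hj => ?_
  refine (hs j).abs.div ((hs i).abs.add (hs j).abs) fun x hx hzero => ?_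
  obtain ⟨hsi, hsj⟩ := (add_eq_zero_iff_of_nonneg (abs_nonneg _) (abs_nonneg _)).1 hzero
  exact hdisj (Finset.ne_of_mem_erase hj).symm x hx (abs_eq_zero.1 hsi) (abs_eq_zero.1 hsj)

end Separation

section DampedSine

noncomputable def dampedSine (k i : ℕ) (t : ℝ) : ℝ :=
  t * sin (π * (t⁻¹ - i) / k)

theorem continuous_dampedSine (k i : ℕ) : Continuous (dampedSine k i) := by
  refine continuous_iff_continuousAt.2 fun t => ?_
  rcases eq_or_ne t 0 with rfl | ht
  · have hbound : ∀ u, ‖dampedSine k i u‖ ≤ ‖u‖ := fun u => by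
      rw [dampedSine, norm_mul]
      exact mul_le_of_le_one_right (norm_nonneg u) (abs_sin_le_one _)
    simpa [ContinuousAt, dampedSine] using squeeze_zero_norm hbound tendsto_norm_zero
  · unfold dampedSine
    fun_prop (disch := exact ht)

theorem dampedSine_eq_zero_iff {k : ℕ} (hk : k ≠ 0) (i : ℕ) {t : ℝ} (ht : t ≠ 0) :
    dampedSine k i t = 0 ↔ ∃ m : ℤ, t⁻¹ = i + k * m := by
  have hk' : (k : ℝ) ≠ 0 := Nat.cast_ne_zero.2 hk
  rw [dampedSine, mul_eq_zero, or_iff_right ht, sin_eq_zero_iff]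
  refine exists_congr fun m => ⟨fun h => ?_, fun h => ?_⟩
  · field_simp at h ⊢
    linarith
  · rw [h]
    field_simp
    ring

theorem dampedSine_ne_zero_of_eq_zero {k : ℕ} {i j : Fin k} (hij : i ≠ j) {t : ℝ} (ht : t ≠ 0)
    (hi : dampedSine k i t = 0) : dampedSine k j t ≠ 0 := by
  intro hj
  obtain ⟨m, hm⟩ := (dampedSine_eq_zero_iff i.pos.ne' i ht).1 hi
  obtain ⟨n, hn⟩ := (dampedSine_eq_zero_iff i.pos.ne' j ht).1 hj
  have hint : (i : ℤ) + k * m = j + k * n := by exact_mod_cast hm.symm.trans hn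
  have hmod := congrArg (· % (k : ℤ)) hint
  simp only [Int.add_mul_emod_self_left] at hmod
  rw [Int.emod_eq_of_lt (by positivity) (by exact_mod_cast i.isLt),
    Int.emod_eq_of_lt (by positivity) (by exact_mod_cast j.isLt)] at hmod
  exact hij (Fin.ext (by exact_mod_cast hmod))

theorem exists_seq_tendsto_zero_dampedSine_eq_zero {k : ℕ} (hk : k ≠ 0) (i : ℕ) :
    ∃ t : ℕ → ℝ, (∀ n, 0 < t n) ∧ Tendsto t atTop (𝓝 0) ∧ ∀ n, dampedSine k i (t n) = 0 := by
  have hk' : (0 : ℝ) < k := Nat.cast_pos.2 (Nat.pos_of_ne_zero hk)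
  refine ⟨fun n => ((i : ℝ) + k * (n + 1 : ℕ))⁻¹, fun n => by positivity, ?_, fun n => ?_⟩
  · refine tendsto_inv_atTop_zero.comp (tendsto_atTop_add_const_left _ _ ?_)
    exact (tendsto_natCast_atTop_atTop.comp (tendsto_add_atTop_nat 1)).const_mul_atTop hk'
  · rw [dampedSine_eq_zero_iff hk i (by positivity), inv_inv]
    exact ⟨n + 1, by push_cast; ring⟩

end DampedSine

theorem mem_closure_dampedSine_zeroSet {E : Type*} [NormedAddCommGroup E] [NormedSpace ℝ E]
    [Nontrivial E] {k : ℕ} (hk : k ≠ 0) (i : ℕ) {U : Set E} {p₀ : E} (hU : U ∈ 𝓝 p₀) :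
    p₀ ∈ closure ({x | x ∈ U ∧ dampedSine k i (dist x p₀) = 0} \ {p₀}) := by
  obtain ⟨v, hv⟩ := exists_norm_eq E zero_le_one
  obtain ⟨t, htpos, htlim, hzero⟩ := exists_seq_tendsto_zero_dampedSine_eq_zero hk i
  have hdist : ∀ n, dist (p₀ + t n • v) p₀ = t n := fun n => by
    rw [dist_eq_norm, add_sub_cancel_left, norm_smul, hv, mul_one, Real.norm_of_nonneg (htpos n).le]
  have hlim : Tendsto (fun n => p₀ + t n • v) atTop (𝓝 p₀) := by
    simpa using tendsto_const_nhds.add (htlim.smul_const v)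
  refine mem_closure_of_tendsto hlim
    ((hlim.eventually_mem hU).mono fun n hn => ⟨⟨hn, ?_⟩, fun h => ?_⟩)
  · rw [hdist, hzero]
  · have := hdist n
    rw [Set.mem_singleton_iff.1 h, dist_self] at this
    exact (htpos n).ne this

theorem stmt_17_general (r k : ℕ) (hr : 2 ≤ r)
    (U : Set (Fin r → ℝ)) (hU : IsOpen U) (p₀ : Fin r → ℝ) (hp₀ : p₀ ∈ U) :
    ∃ s δ : Fin k → ((Fin r → ℝ) → ℝ),
      (∀ i, ContinuousOn (s i) U) ∧
      (∀ i, ContinuousOn (δ i) (U \ {p₀})) ∧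
      (∀ i, ∃ M : ℝ, ∀ x ∈ U \ {p₀}, |δ i x| ≤ M) ∧
      (∀ i j, i ≠ j →
        ({x | x ∈ U ∧ s i x = 0} \ {p₀}) ∩ ({x | x ∈ U ∧ s j x = 0} \ {p₀}) = ∅) ∧
      (∀ i, s i p₀ = 0 ∧ p₀ ∈ closure ({x | x ∈ U ∧ s i x = 0} \ {p₀})) ∧
      (∀ i, (∀ x ∈ ({x | x ∈ U ∧ s i x = 0} \ {p₀}), δ i x = 1) ∧
        ∀ j, j ≠ i → ∀ x ∈ ({x | x ∈ U ∧ s j x = 0} \ {p₀}), δ i x = 0) := by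
  have : Nonempty (Fin r) := ⟨⟨0, by omega⟩⟩
  set s : Fin k → (Fin r → ℝ) → ℝ := fun i x => dampedSine k i (dist x p₀)
  have hs : ∀ i, Continuous (s i) := fun i =>
    (continuous_dampedSine k i).comp (continuous_id.dist continuous_const)
  have hdisj : Pairwise fun i j => ∀ x ∈ U \ {p₀}, s i x = 0 → s j x ≠ 0 :=
    fun i j hij x hx => dampedSine_ne_zero_of_eq_zero hij (dist_ne_zero.2 hx.2)
  refine ⟨s, separatingFun s, fun i => (hs i).continuousOn,
    continuousOn_separatingFun hdisj fun j => (hs j).continuousOn,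
    fun i => ⟨1, fun x _ => abs_separatingFun_le_one s i x⟩, ?_,
    fun i => ⟨by simp [s, dampedSine],
      mem_closure_dampedSine_zeroSet i.pos.ne' i (hU.mem_nhds hp₀)⟩,
    fun i => ⟨fun x hx => separatingFun_eq_one hdisj ⟨hx.1.1, hx.2⟩ hx.1.2,
      fun j hji x hx => separatingFun_eq_zero hji hx.1.2⟩⟩
  intro i j hij
  refine Set.eq_empty_iff_forall_notMem.2 fun x ⟨⟨⟨hxU, hi⟩, hx⟩, ⟨_, hj⟩, _⟩ => ?_
  exact hdisj hij x ⟨hxU, hx⟩ hi hj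

theorem stmt_17 (r k : ℕ) (hr : 2 ≤ r) (hk : 1 ≤ k)
    (U : Set (Fin r → ℝ)) (hU : IsOpen U) (p₀ : Fin r → ℝ) (hp₀ : p₀ ∈ U) :
    ∃ s δ : Fin k → ((Fin r → ℝ) → ℝ),
      (∀ i, ContinuousOn (s i) U) ∧
      (∀ i, ContinuousOn (δ i) (U \ {p₀})) ∧
      (∀ i, ∃ M : ℝ, ∀ x ∈ U \ {p₀}, |δ i x| ≤ M) ∧
      (∀ i j, i ≠ j →
        ({x | x ∈ U ∧ s i x = 0} \ {p₀}) ∩ ({x | x ∈ U ∧ s j x = 0} \ {p₀}) = ∅) ∧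
      (∀ i, s i p₀ = 0 ∧ p₀ ∈ closure ({x | x ∈ U ∧ s i x = 0} \ {p₀})) ∧
      (∀ i, (∀ x ∈ ({x | x ∈ U ∧ s i x = 0} \ {p₀}), δ i x = 1) ∧
        ∀ j, j ≠ i → ∀ x ∈ ({x | x ∈ U ∧ s j x = 0} \ {p₀}), δ i x = 0) :=
  stmt_17_general r k hr U hU p₀ hp₀
end

section
/- Let p be a prime, let k ≥ 1 be an integer, let U ⊆ ℚ_p be open and let p₀ ∈ U. Then there exist continuous functions s₁, …, s_k : U → ℚ_p and continuous bounded functions δ₁, …, δ_k : U ∖ {p₀} → ℚ_p such that, setting Sᵢ = {x ∈ U : sᵢ(x) = 0} ∖ {p₀}: (1) the sets S₁, …, S_k are pairwise disjoint; (2) for each i, sᵢ(p₀) = 0 and p₀ lies in the closure of Sᵢ (i.e. p₀ is a non-isolated zero of sᵢ); (3) for each i, δᵢ = 1 on Sᵢ and δᵢ = 0 on S_j for every j ≠ i. -/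
/-!
Sort the points `x ≠ p₀` by the residue modulo `k` of the valuation of `x - p₀`, i.e. put the
sphere of radius `p ^ (-n)` about `p₀` into the class `S (n % k)`. Spheres about `p₀` are open in
the ultrametric space `ℚ_[p]`, so each class has no frontier point other than `p₀`, and each class
accumulates at `p₀` since it contains the points `p₀ + p ^ n` with `n % k = i`. Then
`sᵢ = x - p₀` off `Sᵢ` (and `0` on `Sᵢ`) is continuous, because it agrees with `x - p₀` at the
only frontier point `p₀`, and `δᵢ` is the indicator of `Sᵢ`.
-/

open Filter Topology Metric Set

theorem IsUltrametricDist.frontier_preimage_dist_subset {X : Type*} [MetricSpace X]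
    [IsUltrametricDist X] (p₀ : X) (R : Set ℝ) : frontier ((dist · p₀) ⁻¹' R) ⊆ {p₀} := by
  intro x hx
  by_contra hne
  have hsphere : sphere p₀ (dist x p₀) ∈ 𝓝 x :=
    (isOpen_sphere p₀ (dist_ne_zero.2 hne)).mem_nhds (mem_sphere.2 rfl)
  by_cases hr : dist x p₀ ∈ R
  · refine hx.2 (mem_interior_iff_mem_nhds.2 (mem_of_superset hsphere fun y hy => ?_))
    rwa [mem_preimage, mem_sphere.1 hy]
  · have : x ∈ interior ((dist · p₀) ⁻¹' R)ᶜ :=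
      mem_interior_iff_mem_nhds.2 (mem_of_superset hsphere fun y hy => by
        rwa [mem_compl_iff, mem_preimage, mem_sphere.1 hy])
    rw [interior_compl] at this
    exact this hx.1

theorem Continuous.indicator_of_forall_frontier_eq_zero {X M : Type*} [TopologicalSpace X]
    [TopologicalSpace M] [Zero M] {S : Set X} {f : X → M} (hf : Continuous f)
    (hS : ∀ x ∈ frontier S, f x = 0) : Continuous (S.indicator f) := by
  classical
  rw [← piecewise_eq_indicator]
  exact hf.piecewise hS continuous_const

theorem Continuous.continuousOn_indicator_compl_frontier {X M : Type*} [TopologicalSpace X]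
    [TopologicalSpace M] [Zero M] {f : X → M} (hf : Continuous f) (S : Set X) :
    ContinuousOn (S.indicator f) (frontier S)ᶜ := by
  classical
  rw [← piecewise_eq_indicator]
  exact ContinuousOn.piecewise (fun x hx => absurd hx.2 hx.1) hf.continuousOn continuousOn_const

def shellRadii (p k i : ℕ) : Set ℝ := (fun n : ℕ => (p : ℝ) ^ (-(n : ℤ))) '' {n | n % k = i}

theorem zero_notMem_shellRadii {p : ℕ} (hp : 0 < p) (k i : ℕ) : 0 ∉ shellRadii p k i := by
  rintro ⟨n, -, hn⟩
  exact (zpow_pos (Nat.cast_pos.2 hp) _).ne' hn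

theorem disjoint_shellRadii {p : ℕ} (hp : 1 < p) {k i j : ℕ} (hij : i ≠ j) :
    Disjoint (shellRadii p k i) (shellRadii p k j) := by
  rw [Set.disjoint_left]
  rintro _ ⟨n, hn, rfl⟩ ⟨m, hm, hnm⟩
  have : (m : ℤ) = n :=
    neg_inj.1 (zpow_right_injective₀ (by positivity) (by exact_mod_cast hp.ne') hnm)
  exact hij (by simp_all)

theorem Padic.mem_closure_inter_preimage_dist_shellRadii {p : ℕ} [Fact p.Prime] {k i : ℕ}
    (hi : i < k) {U : Set ℚ_[p]} {p₀ : ℚ_[p]} (hU : U ∈ 𝓝 p₀) :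
    p₀ ∈ closure (U ∩ (dist · p₀) ⁻¹' shellRadii p k i) := by
  have hn : Tendsto (fun m : ℕ => i + k * m) atTop atTop :=
    tendsto_atTop_mono (fun m => le_add_left (Nat.le_mul_of_pos_left m (by omega))) tendsto_id
  have hseq : Tendsto (fun m : ℕ => p₀ + (p : ℚ_[p]) ^ (i + k * m)) atTop (𝓝 p₀) := by
    simpa using tendsto_const_nhds.add
      ((tendsto_pow_atTop_nhds_zero_of_norm_lt_one norm_p_lt_one).comp hn)
  refine mem_closure_of_tendsto hseq
    ((hseq.eventually_mem hU).mono fun m hm => ⟨hm, i + k * m, ?_, ?_⟩)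
  · simp [Nat.add_mul_mod_self_left, Nat.mod_eq_of_lt hi]
  · simp only [dist_eq_norm, add_sub_cancel_left, norm_p_pow]

theorem stmt_18_general (p : ℕ) [Fact p.Prime] (k : ℕ)
    (U : Set ℚ_[p]) (hU : IsOpen U) (p₀ : ℚ_[p]) (hp₀ : p₀ ∈ U) :
    ∃ s δ : Fin k → (ℚ_[p] → ℚ_[p]),
      (∀ i, ContinuousOn (s i) U) ∧
      (∀ i, ContinuousOn (δ i) (U \ {p₀})) ∧
      (∀ i, ∃ M : ℝ, ∀ x ∈ U \ {p₀}, ‖δ i x‖ ≤ M) ∧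
      (∀ i j, i ≠ j →
        ({x | x ∈ U ∧ s i x = 0} \ {p₀}) ∩ ({x | x ∈ U ∧ s j x = 0} \ {p₀}) = ∅) ∧
      (∀ i, s i p₀ = 0 ∧ p₀ ∈ closure ({x | x ∈ U ∧ s i x = 0} \ {p₀})) ∧
      (∀ i, (∀ x ∈ ({x | x ∈ U ∧ s i x = 0} \ {p₀}), δ i x = 1) ∧
        ∀ j, j ≠ i → ∀ x ∈ ({x | x ∈ U ∧ s j x = 0} \ {p₀}), δ i x = 0) := by
  have hp := (Fact.out : p.Prime)
  set S : Fin k → Set ℚ_[p] := fun i => (dist · p₀) ⁻¹' shellRadii p k i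
  have hfrontier (i : Fin k) : frontier (S i) ⊆ {p₀} :=
    IsUltrametricDist.frontier_preimage_dist_subset p₀ _
  have hzero (i : Fin k) : {x | x ∈ U ∧ (S i)ᶜ.indicator (· - p₀) x = 0} \ {p₀} = U ∩ S i := by
    have : p₀ ∉ S i := by simpa [S] using zero_notMem_shellRadii hp.pos k i
    ext x
    by_cases hx : x = p₀ <;> simp_all [indicator_apply_eq_zero, sub_eq_zero]
  have hdisj {i j : Fin k} (hij : i ≠ j) : Disjoint (S i) (S j) :=
    (disjoint_shellRadii hp.one_lt (Fin.val_injective.ne hij)).preimage _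
  refine ⟨fun i => (S i)ᶜ.indicator (· - p₀), fun i => (S i).indicator 1, ?_⟩
  simp only [hzero]
  refine ⟨fun i => ?_, fun i => ?_, fun i => ⟨1, fun x _ => ?_⟩, fun i j hij => ?_,
    fun i => ⟨?_, ?_⟩, fun i => ⟨fun x hx => ?_, fun j hji x hx => ?_⟩⟩
  · refine Continuous.continuousOn <|
      (continuous_sub_right p₀).indicator_of_forall_frontier_eq_zero fun x hx => ?_
    rw [frontier_compl] at hx
    simp [mem_singleton_iff.1 (hfrontier i hx)]
  · exact (continuous_one.continuousOn_indicator_compl_frontier _).mono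
      fun x hx hxS => hx.2 (hfrontier i hxS)
  · simpa using norm_indicator_le_norm_self (1 : ℚ_[p] → ℚ_[p]) x
  · exact disjoint_iff_inter_eq_empty.1 ((hdisj hij).mono inter_subset_right inter_subset_right)
  · simp
  · exact Padic.mem_closure_inter_preimage_dist_shellRadii i.isLt (hU.mem_nhds hp₀)
  · exact indicator_of_mem hx.2 1
  · exact indicator_of_notMem ((hdisj hji).notMem_of_mem_left hx.2) 1

theorem stmt_18 (p : ℕ) [Fact p.Prime] (k : ℕ) (hk : 1 ≤ k)
    (U : Set ℚ_[p]) (hU : IsOpen U) (p₀ : ℚ_[p]) (hp₀ : p₀ ∈ U) :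
    ∃ s δ : Fin k → (ℚ_[p] → ℚ_[p]),
      (∀ i, ContinuousOn (s i) U) ∧
      (∀ i, ContinuousOn (δ i) (U \ {p₀})) ∧
      (∀ i, ∃ M : ℝ, ∀ x ∈ U \ {p₀}, ‖δ i x‖ ≤ M) ∧
      (∀ i j, i ≠ j →
        ({x | x ∈ U ∧ s i x = 0} \ {p₀}) ∩ ({x | x ∈ U ∧ s j x = 0} \ {p₀}) = ∅) ∧
      (∀ i, s i p₀ = 0 ∧ p₀ ∈ closure ({x | x ∈ U ∧ s i x = 0} \ {p₀})) ∧
      (∀ i, (∀ x ∈ ({x | x ∈ U ∧ s i x = 0} \ {p₀}), δ i x = 1) ∧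
        ∀ j, j ≠ i → ∀ x ∈ ({x | x ∈ U ∧ s j x = 0} \ {p₀}), δ i x = 0) :=
  stmt_18_general p k U hU p₀ hp₀
end
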